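/- arXiv:2604.17607 — 7 statements merged into one kernel-verified Lean document; each statement's English description precedes it below -/
import Mathlib

section
/- Let G be a connected graph of order n with diameter at most 2, and let x(x-λ_1)(x-λ_2)⋯(x-λ_{n-1}) be the characteristic polynomial of its Laplacian matrix L(G) (with λ_i the nonzero-indexed Laplacian eigenvalues, one root being 0). Then the characteristic polynomial of the distance Laplacian matrix D^L(G) is x·∏_{i=1}^{n-1}(x - (2n - λ_i)). Equivalently, the nonzero distance Laplacian eigenvalues are exactly 2n - λ_i for the Laplacian eigenvalues λ_1,...,λ_{n-1}. -/
open Polynomial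

-- The Laplacian matrix `L(G) = Deg(G) - A(G)` of a graph `G`.
open scoped Classical in
noncomputable def lapMat {V : Type*} [Fintype V] (G : SimpleGraph V) : Matrix V V ℝ :=
  Matrix.diagonal (fun v => (G.degree v : ℝ)) -
    Matrix.of (fun u v => if G.Adj u v then (1 : ℝ) else 0)

/-- The distance Laplacian matrix `D^L(G) = Tr(G) - D(G)` of a graph `G`. -/
noncomputable def distLap {V : Type*} [Fintype V] [DecidableEq V] (G : SimpleGraph V) :
    Matrix V V ℝ :=
  Matrix.diagonal (fun v => ∑ u, (G.dist v u : ℝ)) - Matrix.of (fun u v => (G.dist u v : ℝ))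

/-!
When the diameter is at most `2`, the distance matrix is `2(J - I) - A`, so
`D^L = 2n I - L - 2J`. The matrix `2n I - L` has constant row sums `2n` and eigenvalues
`2n - λ` for the Laplacian eigenvalues `λ`. If `M` has constant row sums `t`, then
`M 𝟙 = t 𝟙`, hence `M + aJ = M (I + (a/t) 𝟙 𝟙ᵀ)`, and the matrix determinant lemma gives
`t · det (M + aJ) = (t + na) · det M`. Applied to the characteristic matrix of `2n I - L`,
adding `-2J` turns the eigenvalue `2n` of `𝟙` into `0` and leaves the other eigenvalues alone.
-/

namespace Matrix

variable {m : Type*} [Fintype m] [DecidableEq m]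

theorem mul_det_add_const_of_row_sums_field {K : Type*} [Field K] {M : Matrix m m K} {t : K}
    (hM : ∀ i, ∑ j, M i j = t) (a : K) :
    t * (M + of fun _ _ => a).det = (t + Fintype.card m * a) * M.det := by
  rcases eq_or_ne t 0 with rfl | ht
  · rcases isEmpty_or_nonempty m with hm | hm
    · simp
    have hdet : M.det = 0 := by
      refine exists_mulVec_eq_zero_iff.mp ⟨fun _ => 1, Function.ne_iff.mpr ⟨hm.some, one_ne_zero⟩, ?_⟩
      ext i
      simpa [mulVec, dotProduct] using hM i
    simp [hdet]
  · have hfactor : M + of (fun _ _ => a) = M * ((1 : Matrix m m K) +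
        replicateCol Unit (fun _ : m => a / t) * replicateRow Unit (fun _ : m => (1 : K))) := by
      rw [Matrix.mul_add, Matrix.mul_one, ← Matrix.mul_assoc]
      congr 1
      ext i j
      simp [Matrix.mul_apply, ← Finset.sum_mul, hM i, mul_div_cancel₀ a ht]
    rw [hfactor, det_mul, det_one_add_replicateCol_mul_replicateRow]
    simp [dotProduct]
    field_simp

theorem mul_det_add_const_of_row_sums {R : Type*} [CommRing R] [IsDomain R] {M : Matrix m m R}
    {t : R} (hM : ∀ i, ∑ j, M i j = t) (a : R) :
    t * (M + of fun _ _ => a).det = (t + Fintype.card m * a) * M.det := by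
  let f := algebraMap R (FractionRing R)
  apply IsFractionRing.injective R (FractionRing R)
  have hMf : ∀ i, ∑ j, M.map f i j = f t := fun i => by simp [← map_sum, hM i]
  have hJ : (of fun _ _ => a : Matrix m m R).map f = of fun _ _ => f a := rfl
  rw [map_mul, map_mul, RingHom.map_det, RingHom.map_det, RingHom.mapMatrix_apply,
    RingHom.mapMatrix_apply, Matrix.map_add _ (map_add f), hJ, map_add, map_mul, map_natCast]
  exact mul_det_add_const_of_row_sums_field hMf (f a)

theorem charpoly_sub_const_of_row_sums {R : Type*} [CommRing R] [IsDomain R] {A : Matrix m m R}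
    {c : R} (hA : ∀ i, ∑ j, A i j = c) (a : R) :
    (X - C c) * (A - of fun _ _ => a).charpoly = (X - C (c - Fintype.card m * a)) * A.charpoly := by
  have hrow : ∀ i, ∑ j, charmatrix A i j = X - C c := fun i => by
    simp [charmatrix_apply, diagonal_apply, Finset.sum_sub_distrib, ← map_sum, hA i]
  have hcm : charmatrix (A - of fun _ _ => a) = charmatrix A + of fun _ _ => C a := by
    ext i j : 2
    simp [charmatrix_apply]
    ring
  rw [charpoly, hcm, mul_det_add_const_of_row_sums hrow, charpoly, map_sub, map_mul, map_natCast]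
  ring

theorem charpoly_scalar_sub {R : Type*} [CommRing R] (A : Matrix m m R) (s : R) :
    (scalar m s - A).charpoly = (-1) ^ Fintype.card m * A.charpoly.comp (C s - X) := by
  have hcm : (charmatrix A).map (fun p => p.comp (C s - X)) = -charmatrix (scalar m s - A) := by
    ext i j
    by_cases h : i = j
    · subst h; simp; ring
    · simp [h]
  rw [charpoly, charpoly, ← coe_compRingHom_apply, RingHom.map_det, RingHom.mapMatrix_apply]
  simp only [coe_compRingHom]
  rw [hcm, det_neg, ← mul_assoc, ← mul_pow]
  simp

end Matrix

theorem Polynomial.neg_one_pow_mul_X_mul_prod_comp {R : Type*} [CommRing R] {ι : Type*}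
    [Fintype ι] (μ : ι → R) (s : R) {k : ℕ} (hk : Fintype.card ι + 1 = k) :
    (-1) ^ k * (X * ∏ i, (X - C (μ i))).comp (C s - X) =
      (X - C s) * ∏ i, (X - C (s - μ i)) := by
  have h : ∀ i, (C s - X - C (μ i)) = -1 * (X - C (s - μ i)) := fun i => by
    rw [map_sub]; ring
  subst hk
  rw [mul_comp, X_comp, prod_comp]
  simp only [sub_comp, X_comp, C_comp, h, Finset.prod_mul_distrib, Finset.prod_const,
    Finset.card_univ]
  have hsq : ((-1 : R[X]) ^ Fintype.card ι) * (-1) ^ Fintype.card ι = 1 := by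
    rw [← mul_pow]; simp
  linear_combination (X - C s) * (∏ i, (X - C (s - μ i))) * hsq

namespace SimpleGraph

variable {V : Type*} (G : SimpleGraph V)

theorem dist_eq_two_of_not_adj (hG : G.Connected) {u v : V} (hle : G.dist u v ≤ 2)
    (hne : u ≠ v) (hadj : ¬G.Adj u v) : G.dist u v = 2 := by
  have hpos : 0 < G.dist u v := hG.pos_dist_of_ne hne
  have hone : G.dist u v ≠ 1 := fun h => hadj (dist_eq_one_iff_adj.mp h)
  omega

theorem dist_eq_of_forall_dist_le_two [DecidableEq V] [DecidableRel G.Adj] (hG : G.Connected)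
    (hdiam : ∀ u v : V, G.dist u v ≤ 2) (u v : V) :
    (G.dist u v : ℝ) = 2 - 2 * (if u = v then 1 else 0) - (if G.Adj u v then 1 else 0) := by
  by_cases hne : u = v
  · simp [hne]
  by_cases hadj : G.Adj u v
  · simp [hne, hadj, dist_eq_one_iff_adj.mpr hadj]
    norm_num
  · simp [hne, hadj, G.dist_eq_two_of_not_adj hG (hdiam u v) hne hadj]

theorem sum_dist_eq_of_forall_dist_le_two [Fintype V] [DecidableEq V] [DecidableRel G.Adj]
    (hG : G.Connected) (hdiam : ∀ u v : V, G.dist u v ≤ 2) (v : V) :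
    ∑ u, (G.dist v u : ℝ) = 2 * Fintype.card V - 2 - G.degree v := by
  simp only [G.dist_eq_of_forall_dist_le_two hG hdiam v, Finset.sum_sub_distrib,
    ← Finset.mul_sum, G.degree_eq_sum_if_adj (R := ℝ)]
  simp [mul_comm]

end SimpleGraph

open Matrix

theorem lapMat_row_sum {V : Type*} [Fintype V] (G : SimpleGraph V) (u : V) :
    ∑ v, lapMat G u v = 0 := by
  classical
  simp [lapMat, diagonal_apply, Finset.sum_sub_distrib, G.degree_eq_sum_if_adj (R := ℝ)]

theorem distLap_eq_of_forall_dist_le_two {V : Type*} [Fintype V] [DecidableEq V]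
    (G : SimpleGraph V) (hG : G.Connected) (hdiam : ∀ u v : V, G.dist u v ≤ 2) :
    distLap G = scalar V (2 * Fintype.card V : ℝ) - lapMat G - of fun _ _ => 2 := by
  classical
  ext u v
  by_cases h : u = v
  · subst h
    simp [distLap, lapMat, G.sum_dist_eq_of_forall_dist_le_two hG hdiam]
    ring
  · simp [distLap, lapMat, h, G.dist_eq_of_forall_dist_le_two hG hdiam]

/-- For a connected graph of order `n` with diameter at most `2`, if the Laplacian
characteristic polynomial is `x ∏ (x - λᵢ)`, then the distance Laplacian characteristic
polynomial is `x ∏ (x - (2n - λᵢ))`. -/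
theorem stmt2 {V : Type*} [Fintype V] [DecidableEq V] (G : SimpleGraph V)
    (hG : G.Connected) (n : ℕ) (hn : Fintype.card V = n)
    (hdiam : ∀ u v : V, G.dist u v ≤ 2)
    (lam : Fin (n - 1) → ℝ)
    (hL : (lapMat G).charpoly = X * ∏ i, (X - C (lam i))) :
    (distLap G).charpoly = X * ∏ i, (X - C (2 * (n : ℝ) - lam i)) := by
  have hcard : Fintype.card (Fin (n - 1)) + 1 = Fintype.card V := by
    have := hG.nonempty
    have := Fintype.card_pos (α := V)
    rw [Fintype.card_fin]
    omega
  have hD : distLap G = scalar V (2 * n : ℝ) - lapMat G - of fun _ _ => 2 :=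
    hn ▸ distLap_eq_of_forall_dist_le_two G hG hdiam
  have hrow : ∀ u, ∑ v, (scalar V (2 * n : ℝ) - lapMat G) u v = 2 * n := fun u => by
    simp [Finset.sum_sub_distrib, lapMat_row_sum, diagonal_apply]
  have hzero : 2 * (n : ℝ) - Fintype.card V * 2 = 0 := by
    rw [hn]; ring
  have key := charpoly_sub_const_of_row_sums hrow 2
  rw [← hD, charpoly_scalar_sub, hL, Polynomial.neg_one_pow_mul_X_mul_prod_comp lam _ hcard,
    hzero, map_zero, sub_zero, mul_left_comm] at key
  exact mul_left_cancel₀ (X_sub_C_ne_zero _) key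
end

section
/- Let G be a connected graph of order n and let S = {v_1,...,v_s} be an independent set of G such that N(v_i) = N(v_j) for all i,j ∈ {1,...,s}. Then all vertices in S have the same transmission ∂ = Tr(v_i), and ∂ + 2 is an eigenvalue of the distance Laplacian matrix D^L(G) with multiplicity at least s - 1. -/
open Polynomial

section Aux

open SimpleGraph

variable {V : Type*} {G : SimpleGraph V}

/-- If `u` and `v` have the same neighbourhood, any vertex `w ≠ v` is at least as close
to `u` as it is to `v`. -/
lemma dist_le_of_nbhd (hG : G.Connected) {u v w : V}
    (h : G.neighborSet u = G.neighborSet v) (hwv : w ≠ v) :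
    G.dist w u ≤ G.dist w v := by
  obtain ⟨p, hp⟩ := hG.exists_walk_length_eq_dist v w
  cases p with
  | nil => exact absurd rfl hwv.symm
  | @cons _ y _ ha r =>
      have hy : y ∈ G.neighborSet v := ha
      rw [← h] at hy
      have hy' : G.Adj u y := hy
      have hwalk : G.dist w u ≤ (r.reverse.concat hy'.symm).length := SimpleGraph.dist_le _
      rw [Walk.length_concat, Walk.length_reverse] at hwalk
      have : (Walk.cons ha r).length = G.dist w v := by rw [hp, SimpleGraph.dist_comm]
      rw [Walk.length_cons] at this
      omega

lemma dist_eq_of_nbhd (hG : G.Connected) {u v w : V}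
    (h : G.neighborSet u = G.neighborSet v) (hwu : w ≠ u) (hwv : w ≠ v) :
    G.dist w u = G.dist w v :=
  le_antisymm (dist_le_of_nbhd hG h hwv) (dist_le_of_nbhd hG h.symm hwu)

lemma dist_eq_two_of_nbhd (hG : G.Connected) {u v : V} (huv : u ≠ v)
    (hadj : ¬ G.Adj u v) (h : G.neighborSet u = G.neighborSet v) :
    G.dist u v = 2 := by
  obtain ⟨p, -⟩ := hG.exists_walk_length_eq_dist u v
  cases p with
  | nil => exact absurd rfl huv
  | @cons _ y _ ha r =>
      have hy : y ∈ G.neighborSet u := ha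
      rw [h] at hy
      have hy' : G.Adj v y := hy
      have h2 : G.dist u v ≤ (Walk.cons ha (Walk.cons hy'.symm Walk.nil)).length :=
        SimpleGraph.dist_le _
      simp only [Walk.length_cons, Walk.length_nil] at h2
      have h1 : G.dist u v ≠ 1 := fun hd => hadj (SimpleGraph.dist_eq_one_iff_adj.mp hd)
      have h0 : 0 < G.dist u v := hG.pos_dist_of_ne huv
      omega

end Aux

/-- Key linear-algebra lemma: if a matrix has `card ι` linearly independent eigenvectors
with eigenvalue `μ`, then `(X - C μ) ^ card ι` divides its characteristic polynomial. -/
lemma pow_sub_dvd_charpoly {n : Type*} [Fintype n] [DecidableEq n] (A : Matrix n n ℝ) (μ : ℝ)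
    {ι : Type*} [Fintype ι] (f : ι → n → ℝ) (hli : LinearIndependent ℝ f)
    (hev : ∀ i, A.mulVec (f i) = μ • f i) :
    (X - C μ) ^ (Fintype.card ι) ∣ A.charpoly := by
  classical
  set N : Matrix n n ℝ := A - μ • 1 with hN
  set φ : Module.End ℝ (n → ℝ) := Matrix.toLin' N with hφ
  -- each f i is in the kernel of φ
  have hker : ∀ i, φ (f i) = 0 := by
    intro i
    simp only [hφ, Matrix.toLin'_apply, hN, Matrix.sub_mulVec, Matrix.smul_mulVec,
      Matrix.one_mulVec, hev i, sub_self]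
  -- the span of the f i is contained in the generalized 0-eigenspace of φ
  have hspan : Submodule.span ℝ (Set.range f) ≤ φ.maxGenEigenspace 0 := by
    rw [Submodule.span_le]
    rintro - ⟨i, rfl⟩
    rw [SetLike.mem_coe, Module.End.mem_maxGenEigenspace]
    exact ⟨1, by simp [hker i]⟩
  -- hence card ι ≤ natTrailingDegree of charpoly of N
  have hcard : Fintype.card ι ≤ (Matrix.charpoly N).natTrailingDegree := by
    have h1 : Fintype.card ι = Module.finrank ℝ (Submodule.span ℝ (Set.range f)) :=
      (finrank_span_eq_card hli).symm
    have h2 : Module.finrank ℝ (Submodule.span ℝ (Set.range f)) ≤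
        Module.finrank ℝ (φ.maxGenEigenspace 0) := Submodule.finrank_mono hspan
    have h3 : Module.finrank ℝ (φ.maxGenEigenspace 0) =
        (LinearMap.charpoly φ).natTrailingDegree := LinearMap.finrank_maxGenEigenspace_zero_eq φ
    have h4 : LinearMap.charpoly φ = Matrix.charpoly N := by
      rw [← LinearMap.charpoly_toMatrix φ (Pi.basisFun ℝ n),
        LinearMap.toMatrix_eq_toMatrix', hφ, LinearMap.toMatrix'_toLin']
    calc Fintype.card ι = _ := h1
      _ ≤ _ := h2
      _ = (Matrix.charpoly N).natTrailingDegree := by rw [h3, h4]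
  have hXpow : (X : ℝ[X]) ^ (Fintype.card ι) ∣ Matrix.charpoly N := by
    rw [Polynomial.X_pow_dvd_iff]
    intro d hd
    exact Polynomial.coeff_eq_zero_of_lt_natTrailingDegree (lt_of_lt_of_le hd hcard)
  -- charpoly N = (charpoly A).comp (X + C μ)
  have hcomp : Matrix.charpoly N = (Matrix.charpoly A).comp (X + C μ) := by
    let ψ : ℝ[X] →+* ℝ[X] := Polynomial.eval₂RingHom Polynomial.C (X + C μ)
    have hψ : ∀ p : ℝ[X], ψ p = p.comp (X + C μ) := fun p => rfl
    have hmap : (Matrix.charmatrix A).map ψ = Matrix.charmatrix N := by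
      ext i j
      by_cases hij : i = j
      · subst hij
        simp only [Matrix.map_apply, Matrix.charmatrix_apply_eq, hψ, Polynomial.sub_comp,
          Polynomial.X_comp, Polynomial.C_comp, hN, Matrix.sub_apply, Matrix.smul_apply,
          Matrix.one_apply_eq, smul_eq_mul, mul_one, map_sub]
        ring
      · simp only [Matrix.map_apply, Matrix.charmatrix_apply_ne _ _ _ hij, hψ,
          Polynomial.neg_comp, Polynomial.C_comp, hN, Matrix.sub_apply, Matrix.smul_apply,
          Matrix.one_apply_ne hij, smul_eq_mul, mul_zero, sub_zero]
    calc Matrix.charpoly N = (Matrix.charmatrix N).det := rfl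
      _ = ((Matrix.charmatrix A).map ψ).det := by rw [hmap]
      _ = ψ (Matrix.charmatrix A).det := (RingHom.map_det ψ _).symm
      _ = (Matrix.charpoly A).comp (X + C μ) := hψ _
  rw [hcomp] at hXpow
  obtain ⟨q, hq⟩ := hXpow
  refine ⟨q.comp (X - C μ), ?_⟩
  have := congrArg (fun p : ℝ[X] => p.comp (X - C μ)) hq
  simp only [Polynomial.mul_comp, Polynomial.pow_comp, Polynomial.X_comp,
    Polynomial.comp_assoc, Polynomial.add_comp, Polynomial.C_comp,
    sub_add_cancel, Polynomial.comp_X] at this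
  exact this

/-- If `S` is an independent set of a connected graph `G` whose vertices all share the same
neighbourhood, then the vertices of `S` have a common transmission `∂`, and
`(x - (∂ + 2))^(|S| - 1)` divides the distance Laplacian characteristic polynomial of `G`. -/
theorem stmt4 {V : Type*} [Fintype V] [DecidableEq V] (G : SimpleGraph V)
    (hG : G.Connected) (S : Finset V)
    (hind : ∀ u ∈ S, ∀ v ∈ S, ¬ G.Adj u v)
    (hN : ∀ u ∈ S, ∀ v ∈ S, G.neighborSet u = G.neighborSet v) :
    ∃ t : ℝ, (∀ v ∈ S, ∑ u, (G.dist v u : ℝ) = t) ∧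
      (X - C (t + 2)) ^ (S.card - 1) ∣ (distLap G).charpoly := by
  classical
  -- distances between distinct vertices of S
  have hdist2 : ∀ u ∈ S, ∀ v ∈ S, u ≠ v → G.dist u v = 2 := fun u hu v hv huv =>
    dist_eq_two_of_nbhd hG huv (hind u hu v hv) (hN u hu v hv)
  have hdisteq : ∀ u ∈ S, ∀ v ∈ S, ∀ w : V, w ≠ u → w ≠ v → G.dist w u = G.dist w v :=
    fun u hu v hv w hwu hwv => dist_eq_of_nbhd hG (hN u hu v hv) hwu hwv
  -- equal transmissions
  have hsum : ∀ u ∈ S, ∀ v ∈ S, (∑ w, (G.dist u w : ℝ)) = ∑ w, (G.dist v w : ℝ) := by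
    intro u hu v hv
    rcases eq_or_ne u v with rfl | huv
    · rfl
    · refine Fintype.sum_equiv (Equiv.swap u v) _ _ fun w => ?_
      rcases eq_or_ne w u with rfl | hwu
      · rw [Equiv.swap_apply_left, SimpleGraph.dist_self, SimpleGraph.dist_self]
      rcases eq_or_ne w v with rfl | hwv
      · rw [Equiv.swap_apply_right, SimpleGraph.dist_comm]
      · rw [Equiv.swap_apply_of_ne_of_ne hwu hwv, SimpleGraph.dist_comm,
          hdisteq u hu v hv w hwu hwv, SimpleGraph.dist_comm]
  rcases S.eq_empty_or_nonempty with rfl | ⟨v0, hv0⟩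
  · exact ⟨0, by simp, by simp⟩
  refine ⟨∑ w, (G.dist v0 w : ℝ), fun v hv => hsum v hv v0 hv0, ?_⟩
  set t : ℝ := ∑ w, (G.dist v0 w : ℝ) with ht
  -- the eigenvector family
  set f : {u // u ∈ S.erase v0} → V → ℝ :=
    fun u => Pi.single (u : V) (1 : ℝ) - Pi.single v0 1 with hf
  have hne : ∀ u : {u // u ∈ S.erase v0}, (u : V) ≠ v0 :=
    fun u => Finset.ne_of_mem_erase u.2
  have hmem : ∀ u : {u // u ∈ S.erase v0}, (u : V) ∈ S :=
    fun u => Finset.mem_of_mem_erase u.2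
  -- linear independence
  have hli : LinearIndependent ℝ f := by
    rw [Fintype.linearIndependent_iff]
    intro g hg i
    have := congrFun hg (i : V)
    simp only [Finset.sum_apply, Pi.smul_apply, hf, Pi.sub_apply, Pi.single_apply,
      Pi.zero_apply, smul_eq_mul, if_neg (hne i), sub_zero, Subtype.coe_inj,
      mul_ite, mul_one, mul_zero] at this
    rwa [Finset.sum_ite_eq Finset.univ i g, if_pos (Finset.mem_univ i)] at this
  -- eigenvector equation
  have hev : ∀ i, (distLap G).mulVec (f i) = (t + 2) • f i := by
    intro i
    funext x
    have hsingle : ∀ (c : V) (w : V → ℝ), (∑ z, w z * (Pi.single c (1:ℝ) : V → ℝ) z) = w c := by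
      intro c w
      simp [Pi.single_apply, mul_ite, mul_one, mul_zero, Finset.sum_ite_eq']
    have hmv : (distLap G).mulVec (f i) x = distLap G x (i : V) - distLap G x v0 := by
      simp only [Matrix.mulVec, dotProduct, hf, Pi.sub_apply, mul_sub,
        Finset.sum_sub_distrib]
      rw [hsingle (i : V) (fun z => distLap G x z), hsingle v0 (fun z => distLap G x z)]
    have hentry : ∀ y z : V, distLap G y z =
        (if y = z then (∑ w, (G.dist y w : ℝ)) else 0) - (G.dist y z : ℝ) := by
      intro y z
      rcases eq_or_ne y z with rfl | hyz
      · simp [distLap, Matrix.diagonal_apply_eq]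
      · simp [distLap, Matrix.diagonal_apply_ne _ hyz, hyz]
    rcases eq_or_ne x (i : V) with rfl | hxi
    · -- x = u
      have hd : G.dist (i : V) v0 = 2 := hdist2 _ (hmem i) _ hv0 (hne i)
      rw [hmv, hentry, hentry, if_pos rfl, if_neg (hne i), hd,
        SimpleGraph.dist_self, hsum _ (hmem i) _ hv0]
      simp only [Pi.smul_apply, hf, Pi.sub_apply, Pi.single_apply, if_pos rfl,
        if_neg (hne i), smul_eq_mul]
      push_cast
      ring
    rcases eq_or_ne x v0 with hx | hxv0
    · -- x = v0
      have hd : G.dist v0 (i : V) = 2 := hdist2 _ hv0 _ (hmem i) (Ne.symm (hne i))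
      rw [hmv, hx, hentry, hentry, if_pos rfl, if_neg (Ne.symm (hne i)), hd,
        SimpleGraph.dist_self]
      simp only [Pi.smul_apply, hf, Pi.sub_apply, Pi.single_apply,
        if_neg (Ne.symm (hne i)), if_pos rfl, smul_eq_mul]
      push_cast [ht]
      ring
    · -- other coordinates
      have hd : G.dist x (i : V) = G.dist x v0 :=
        hdisteq _ (hmem i) _ hv0 x hxi hxv0
      rw [hmv, hentry, hentry, if_neg hxi, if_neg hxv0, hd]
      simp only [Pi.smul_apply, hf, Pi.sub_apply, Pi.single_apply,
        if_neg (fun h => hxi h), if_neg (fun h => hxv0 h), smul_eq_mul]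
      ring
  have hcard : Fintype.card {u // u ∈ S.erase v0} = S.card - 1 := by
    rw [Fintype.card_coe, Finset.card_erase_of_mem hv0]
  have := pow_sub_dvd_charpoly (distLap G) (t + 2) f hli hev
  rwa [hcard] at this
end

section
/- Let G be a connected graph of order n and let W = {v_1,...,v_ω} be a clique of G such that N(v_i) − W = N(v_j) − W for all i,j ∈ {1,...,ω}. Then all vertices in W have the same transmission ∂ = Tr(v_i), and ∂ + 1 is an eigenvalue of the distance Laplacian matrix D^L(G) with multiplicity at least ω - 1. -/
open Polynomial

open Matrix

section LinAlg

private lemma my_charpoly_conj {n : Type*} [Fintype n] [DecidableEq n] {R : Type*} [CommRing R]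
    [StarRing R] (A U : Matrix n n R) (h1 : U * star U = 1) :
    (U * A * star U).charpoly = A.charpoly := by
  have key : charmatrix (U * A * star U) =
      (C : R →+* R[X]).mapMatrix U * charmatrix A * (C : R →+* R[X]).mapMatrix (star U) := by
    unfold charmatrix
    have hc : Commute (scalar n (X : R[X])) ((C : R →+* R[X]).mapMatrix U) :=
      scalar_commute _ (fun r => Commute.all _ _) _
    rw [mul_sub, sub_mul, ← _root_.map_mul, ← _root_.map_mul]
    congr 1
    rw [← hc.eq, mul_assoc, ← _root_.map_mul, h1, _root_.map_one, mul_one]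
  have hdet : ((C : R →+* R[X]).mapMatrix U).det * ((C : R →+* R[X]).mapMatrix (star U)).det = 1 := by
    rw [← det_mul, ← _root_.map_mul, h1, _root_.map_one, det_one]
  unfold Matrix.charpoly
  rw [key, det_mul, det_mul]
  ring_nf
  rw [mul_comm, ← mul_assoc, mul_comm (((C : R →+* R[X]).mapMatrix (star U)).det), hdet, one_mul]

private lemma my_charpoly_diagonal {n : Type*} [Fintype n] [DecidableEq n] {R : Type*} [CommRing R]
    (w : n → R) : (diagonal w).charpoly = ∏ i, (X - C (w i)) := by
  obtain e := (Fintype.equivFin n)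
  rw [← charpoly_reindex e (diagonal w)]
  have : (reindex e e (diagonal w)) = diagonal (w ∘ e.symm) := by
    simp [reindex_apply, submatrix_diagonal_equiv]
  rw [this, charpoly_of_upperTriangular _ (blockTriangular_diagonal _)]
  rw [← Equiv.prod_comp e.symm (fun i => (X - C (w i)))]
  simp

private lemma my_hermitian_charpoly {n : Type*} [Fintype n] [DecidableEq n] {A : Matrix n n ℝ}
    (hA : A.IsHermitian) : A.charpoly = ∏ i, (X - C (hA.eigenvalues i)) := by
  have hU : (hA.eigenvectorUnitary : Matrix n n ℝ) * star (hA.eigenvectorUnitary : Matrix n n ℝ) = 1 :=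
    (Matrix.mem_unitaryGroup_iff).mp hA.eigenvectorUnitary.2
  conv_lhs => rw [hA.spectral_theorem]
  rw [Unitary.conjStarAlgAut_apply, my_charpoly_conj _ _ hU]
  have : (RCLike.ofReal ∘ hA.eigenvalues : n → ℝ) = hA.eigenvalues := by
    funext i; simp
  rw [this, my_charpoly_diagonal]

private lemma aux_dvd {n : Type*} [Fintype n] [DecidableEq n] {A : Matrix n n ℝ}
    (hA : A.IsHermitian) (μ : ℝ) {ι : Type*} [Fintype ι] (y : ι → n → ℝ)
    (hli : LinearIndependent ℝ y) (hev : ∀ i, A *ᵥ y i = μ • y i) :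
    (X - C μ) ^ (Fintype.card ι) ∣ A.charpoly := by
  classical
  -- the kernel of `A - μ•1`
  set B : Matrix n n ℝ := A - μ • 1 with hB
  have hker : ∀ i, B.mulVecLin (y i) = 0 := by
    intro i
    simp only [hB, mulVecLin_apply, sub_mulVec, smul_mulVec, one_mulVec, hev i]
    abel
  -- the span of y is inside the kernel
  have hspan : Submodule.span ℝ (Set.range y) ≤ LinearMap.ker B.mulVecLin := by
    rw [Submodule.span_le]
    rintro _ ⟨i, rfl⟩
    exact hker i
  have h1 : Fintype.card ι ≤ Module.finrank ℝ (LinearMap.ker B.mulVecLin) := by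
    have := finrank_span_eq_card hli
    calc Fintype.card ι = Module.finrank ℝ (Submodule.span ℝ (Set.range y)) := this.symm
      _ ≤ _ := Submodule.finrank_mono hspan
  -- rank-nullity
  have h2 : B.rank + Module.finrank ℝ (LinearMap.ker B.mulVecLin) = Fintype.card n := by
    have := LinearMap.finrank_range_add_finrank_ker B.mulVecLin
    rw [Module.finrank_pi] at this
    exact this
  -- rank of B via the spectral theorem
  have hU : (hA.eigenvectorUnitary : Matrix n n ℝ) * star (hA.eigenvectorUnitary : Matrix n n ℝ) = 1 :=
    (Matrix.mem_unitaryGroup_iff).mp hA.eigenvectorUnitary.2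
  have hdetU : IsUnit (hA.eigenvectorUnitary : Matrix n n ℝ).det := by
    apply IsUnit.of_mul_eq_one (star (hA.eigenvectorUnitary : Matrix n n ℝ)).det
    rw [← det_mul, hU, det_one]
  have hdetU' : IsUnit (star (hA.eigenvectorUnitary : Matrix n n ℝ)).det := by
    apply IsUnit.of_mul_eq_one (hA.eigenvectorUnitary : Matrix n n ℝ).det
    rw [mul_comm, ← det_mul, hU, det_one]
  have hdiag : diagonal (fun i => hA.eigenvalues i - μ) =
      diagonal hA.eigenvalues - μ • (1 : Matrix n n ℝ) := by
    ext i j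
    by_cases h : i = j
    · subst h; simp [Matrix.diagonal_apply, Matrix.one_apply]
    · simp [Matrix.diagonal_apply_ne _ h, Matrix.one_apply_ne h]
  have hBdecomp : B = (hA.eigenvectorUnitary : Matrix n n ℝ) *
      diagonal (fun i => hA.eigenvalues i - μ) * star (hA.eigenvectorUnitary : Matrix n n ℝ) := by
    have hper : (RCLike.ofReal ∘ hA.eigenvalues : n → ℝ) = hA.eigenvalues := by
      funext i; simp
    rw [hdiag, mul_sub, sub_mul, hB]
    congr 1
    · conv_lhs => rw [hA.spectral_theorem, hper, Unitary.conjStarAlgAut_apply]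
    · rw [Matrix.mul_smul, mul_one, Matrix.smul_mul, hU]
  have h3 : B.rank = Fintype.card {i // hA.eigenvalues i - μ ≠ 0} := by
    rw [hBdecomp, rank_mul_eq_left_of_isUnit_det _ _ hdetU',
      rank_mul_eq_right_of_isUnit_det _ _ hdetU, rank_diagonal]
  have h4 : Fintype.card {i // hA.eigenvalues i - μ ≠ 0} +
      Fintype.card {i // hA.eigenvalues i = μ} = Fintype.card n := by
    have : ∀ i, (hA.eigenvalues i - μ ≠ 0) ↔ ¬ (hA.eigenvalues i = μ) := by
      intro i; rw [sub_ne_zero]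
    rw [Fintype.card_congr (Equiv.subtypeEquivRight this), Fintype.card_subtype_compl]
    have := Fintype.card_subtype_le (fun i => hA.eigenvalues i = μ)
    omega
  have h5 : Fintype.card ι ≤ Fintype.card {i // hA.eigenvalues i = μ} := by omega
  -- now the divisibility
  rw [my_hermitian_charpoly hA]
  have hsplit : ∏ i, (X - C (hA.eigenvalues i)) =
      (∏ i ∈ Finset.univ.filter (fun i => hA.eigenvalues i = μ), (X - C (hA.eigenvalues i))) *
      (∏ i ∈ Finset.univ.filter (fun i => ¬ hA.eigenvalues i = μ), (X - C (hA.eigenvalues i))) :=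
    (Finset.prod_filter_mul_prod_filter_not _ _ _).symm
  have hfil : ∏ i ∈ Finset.univ.filter (fun i => hA.eigenvalues i = μ), (X - C (hA.eigenvalues i)) =
      (X - C μ) ^ (Fintype.card {i // hA.eigenvalues i = μ}) := by
    rw [Fintype.card_subtype]
    calc ∏ i ∈ Finset.univ.filter (fun i => hA.eigenvalues i = μ), (X - C (hA.eigenvalues i))
        = ∏ _i ∈ Finset.univ.filter (fun i => hA.eigenvalues i = μ), (X - C μ) :=
          Finset.prod_congr rfl (fun i hi => by rw [(Finset.mem_filter.mp hi).2])
      _ = _ := Finset.prod_const _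
  calc (X - C μ) ^ Fintype.card ι ∣ (X - C μ) ^ (Fintype.card {i // hA.eigenvalues i = μ}) :=
        pow_dvd_pow _ h5
    _ ∣ _ := by rw [hsplit, ← hfil]; exact dvd_mul_right _ _

end LinAlg

section Graph
variable {V : Type*} {G : SimpleGraph V}

private lemma key_le (hG : G.Connected) (W : Finset V)
    (hN : ∀ u ∈ W, ∀ v ∈ W, G.neighborSet u \ (W : Set V) = G.neighborSet v \ (W : Set V)) :
    ∀ d : ℕ, ∀ u ∈ W, ∀ v ∈ W, ∀ w, w ∉ W → G.dist u w ≤ d → G.dist v w ≤ d := by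
  classical
  intro d
  induction d with
  | zero =>
    intro u hu v hv w hw hle
    exfalso
    have h0 : G.dist u w = 0 := Nat.le_zero.mp hle
    have : u = w := (hG.dist_eq_zero_iff).mp h0
    exact hw (this ▸ hu)
  | succ d ih =>
    intro u hu v hv w hw hle
    obtain ⟨p, hp⟩ := (hG.preconnected u w).exists_walk_length_eq_dist
    cases p with
    | nil => exact absurd (rfl : u = u) (by simp_all)
    | cons hadj q =>
      rename_i x
      have hq : G.dist x w ≤ d := by
        have := SimpleGraph.dist_le q
        simp only [SimpleGraph.Walk.length_cons] at hp
        omega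
      by_cases hx : x ∈ W
      · exact le_trans (ih x hx v hv w hw hq) (Nat.le_succ d)
      · have hxN : x ∈ G.neighborSet u \ (W : Set V) := ⟨hadj, hx⟩
        have hvx : G.Adj v x := by
          rw [hN u hu v hv] at hxN
          exact hxN.1
        calc G.dist v w ≤ G.dist v x + G.dist x w := hG.dist_triangle
          _ ≤ 1 + d := by
              have : G.dist v x = 1 := SimpleGraph.dist_eq_one_iff_adj.mpr hvx
              omega
          _ = d + 1 := by omega

private lemma dist_eq_of_mem (hG : G.Connected) (W : Finset V)
    (hclq : ∀ u ∈ W, ∀ v ∈ W, u ≠ v → G.Adj u v)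
    (hN : ∀ u ∈ W, ∀ v ∈ W, G.neighborSet u \ (W : Set V) = G.neighborSet v \ (W : Set V))
    {u v : V} (hu : u ∈ W) (hv : v ∈ W) (w : V) (hwu : w ≠ u) (hwv : w ≠ v) :
    G.dist u w = G.dist v w := by
  by_cases huv : u = v
  · subst huv; rfl
  by_cases hw : w ∈ W
  · rw [SimpleGraph.dist_comm, SimpleGraph.dist_eq_one_iff_adj.mpr (hclq w hw u hu hwu),
      SimpleGraph.dist_comm (u := v), SimpleGraph.dist_eq_one_iff_adj.mpr (hclq w hw v hv hwv)]
  · exact le_antisymm (key_le hG W hN _ v hv u hu w hw le_rfl)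
      (key_le hG W hN _ u hu v hv w hw le_rfl)

end Graph

/-- If `W` is a clique of a connected graph `G` whose vertices all share the same
neighbourhood outside `W`, then the vertices of `W` have a common transmission `∂`, and
`(x - (∂ + 1))^(|W| - 1)` divides the distance Laplacian characteristic polynomial of `G`. -/
theorem stmt5 {V : Type*} [Fintype V] [DecidableEq V] (G : SimpleGraph V)
    (hG : G.Connected) (W : Finset V)
    (hclq : ∀ u ∈ W, ∀ v ∈ W, u ≠ v → G.Adj u v)
    (hN : ∀ u ∈ W, ∀ v ∈ W, G.neighborSet u \ (W : Set V) = G.neighborSet v \ (W : Set V)) :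
    ∃ t : ℝ, (∀ v ∈ W, ∑ u, (G.dist v u : ℝ) = t) ∧
      (X - C (t + 1)) ^ (W.card - 1) ∣ (distLap G).charpoly := by
  classical
  by_cases hWne : W.Nonempty
  swap
  · refine ⟨0, fun v hv => absurd ⟨v, hv⟩ hWne, ?_⟩
    rw [Finset.not_nonempty_iff_eq_empty] at hWne
    simp [hWne]
  obtain ⟨v0, hv0⟩ := hWne
  set t : ℝ := ∑ u, (G.dist v0 u : ℝ) with ht
  -- all vertices of W have the same transmission
  have htr : ∀ v ∈ W, ∑ u, (G.dist v u : ℝ) = t := by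
    intro v hv
    by_cases h : v = v0
    · subst h; rfl
    rw [ht]
    apply Fintype.sum_equiv (Equiv.swap v v0)
    intro u
    by_cases h1 : u = v
    · subst h1
      rw [Equiv.swap_apply_left]
      simp [SimpleGraph.dist_self]
    by_cases h2 : u = v0
    · subst h2
      rw [Equiv.swap_apply_right]
      exact_mod_cast SimpleGraph.dist_comm
    · rw [Equiv.swap_apply_of_ne_of_ne h1 h2]
      exact_mod_cast dist_eq_of_mem hG W hclq hN hv hv0 u h1 h2
  refine ⟨t, htr, ?_⟩
  -- the distance Laplacian is symmetric
  have hH : (distLap G).IsHermitian := by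
    show (distLap G)ᴴ = distLap G
    ext i j
    simp only [conjTranspose_apply, distLap, Matrix.sub_apply, of_apply, star_sub, star_trivial]
    congr 1
    · by_cases h : i = j
      · subst h; rfl
      · rw [Matrix.diagonal_apply_ne' _ h, Matrix.diagonal_apply_ne _ h]
    · exact_mod_cast congrArg (fun k : ℕ => (k : ℝ)) (SimpleGraph.dist_comm)
  -- the eigenvectors
  set y : {v // v ∈ W.erase v0} → (V → ℝ) :=
    fun v => Pi.single v0 1 - Pi.single (v : V) 1 with hy
  have hev : ∀ i, distLap G *ᵥ y i = (t + 1) • y i := by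
    rintro ⟨v, hv⟩
    have hvW : v ∈ W := Finset.mem_of_mem_erase hv
    have hvne : v ≠ v0 := Finset.ne_of_mem_erase hv
    have hadj : G.Adj v0 v := hclq v0 hv0 v hvW (Ne.symm hvne)
    have hd1 : G.dist v0 v = 1 := SimpleGraph.dist_eq_one_iff_adj.mpr hadj
    have hd1' : G.dist v v0 = 1 := by rw [SimpleGraph.dist_comm]; exact hd1
    funext w
    show (distLap G *ᵥ ((Pi.single v0 1 - Pi.single v 1 : V → ℝ))) w
        = ((t + 1) • (Pi.single v0 1 - Pi.single v 1 : V → ℝ)) w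
    simp only [Matrix.mulVec, dotProduct, distLap, Matrix.sub_apply,
      Matrix.diagonal_apply, Matrix.of_apply, Pi.sub_apply, Pi.single_apply,
      Pi.smul_apply, smul_eq_mul, sub_mul, ite_mul, zero_mul, one_mul, mul_sub,
      mul_ite, mul_one, mul_zero, Finset.sum_sub_distrib, Finset.sum_ite_eq,
      Finset.sum_ite_eq', Finset.mem_univ, if_true]
    by_cases hw0 : w = v0
    · subst hw0
      simp only [if_pos rfl, if_neg (Ne.symm hvne), if_true, if_false, eq_self_iff_true]
      rw [htr w hv0, SimpleGraph.dist_self, hd1]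
      push_cast
      ring
    · by_cases hwv : w = v
      · subst hwv
        simp only [if_neg hw0, if_pos rfl, if_true, if_false, eq_self_iff_true]
        rw [htr w hvW, SimpleGraph.dist_self, hd1']
        push_cast
        ring
      · have hdd : G.dist w v0 = G.dist w v := by
          rw [SimpleGraph.dist_comm, SimpleGraph.dist_comm (u := w)]
          exact dist_eq_of_mem hG W hclq hN hv0 hvW w hw0 hwv
        simp only [if_neg hw0, if_neg hwv, hdd]
        ring
  -- linear independence
  have hli : LinearIndependent ℝ y := by
    rw [Fintype.linearIndependent_iff]
    intro g hg i
    have h := congrFun hg (i : V)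
    have hi0 : (i : V) ≠ v0 := Finset.ne_of_mem_erase i.2
    simp only [hy, Finset.sum_apply, Pi.smul_apply, Pi.sub_apply, Pi.single_apply,
      smul_eq_mul, Pi.zero_apply, if_neg hi0] at h
    have hconv : ∀ j : {v // v ∈ W.erase v0},
        g j * ((0:ℝ) - if (i:V) = (j:V) then 1 else 0) = if j = i then -g j else 0 := by
      intro j
      by_cases hj : j = i
      · subst hj; simp
      · have hne : (i:V) ≠ (j:V) := fun hc => hj (Subtype.ext hc.symm)
        simp [hne, hj]
    rw [Finset.sum_congr rfl (fun j _ => hconv j), Finset.sum_ite_eq' Finset.univ i,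
      if_pos (Finset.mem_univ i)] at h
    linarith
  have hdvd := aux_dvd hH (t + 1) y hli hev
  have hcard : Fintype.card {v // v ∈ W.erase v0} = W.card - 1 := by
    rw [Fintype.card_coe]
    exact Finset.card_erase_of_mem hv0
  rw [hcard] at hdvd
  exact hdvd
end

section
/- Let p be a prime. The distance Laplacian characteristic polynomial of the power graph of the elementary abelian group Z_p × Z_p × Z_p (equivalently, of the graph K_1 ∨ (K_{p-1} ∪ ⋯ ∪ K_{p-1}) with p²+p+1 copies of K_{p-1}) is x(x - p³)(x - 2p³ + 1)^{p²+p}(x - 2p³ + p)^{p³ - p² - p - 2}. -/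
open Polynomial

/-- The graph `K₁ ∨ (m copies of K_k)`: the join of a single vertex (`none`) with the
disjoint union of `m` copies of the complete graph `K_k`.  For `m = p² + p + 1` and
`k = p - 1` this is the power graph of `ℤ_p × ℤ_p × ℤ_p`. -/
def coneUnionComplete (m k : ℕ) : SimpleGraph (Option (Fin m × Fin k)) :=
  SimpleGraph.fromRel (fun u v => u = none ∨ Option.map Prod.fst u = Option.map Prod.fst v)

namespace Stmt6Aux

open Finset Matrix

/-- the "distance ≤ 1" relation -/
def cls {m k : ℕ} (u v : Option (Fin m × Fin k)) : Prop :=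
  u = none ∨ v = none ∨ Option.map Prod.fst u = Option.map Prod.fst v

instance {m k : ℕ} (u v : Option (Fin m × Fin k)) : Decidable (cls u v) := by
  unfold cls; infer_instance

lemma cls_refl {m k : ℕ} (u : Option (Fin m × Fin k)) : cls u u := Or.inr (Or.inr rfl)

lemma adj_iff {m k : ℕ} (u v : Option (Fin m × Fin k)) :
    (coneUnionComplete m k).Adj u v ↔ u ≠ v ∧ cls u v := by
  simp only [coneUnionComplete, SimpleGraph.fromRel_adj, cls]
  constructor
  · rintro ⟨h, (h1 | h1) | (h1 | h1)⟩
    exacts [⟨h, Or.inl h1⟩, ⟨h, Or.inr (Or.inr h1)⟩, ⟨h, Or.inr (Or.inl h1)⟩,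
      ⟨h, Or.inr (Or.inr h1.symm)⟩]
  · rintro ⟨h, h1 | h1 | h1⟩
    exacts [⟨h, Or.inl (Or.inl h1)⟩, ⟨h, Or.inr (Or.inl h1)⟩, ⟨h, Or.inl (Or.inr h1)⟩]

lemma dist_real {m k : ℕ} (u v : Option (Fin m × Fin k)) :
    ((coneUnionComplete m k).dist u v : ℝ) =
      2 - (if u = v then 1 else 0) - (if cls u v then 1 else 0) := by
  by_cases h : u = v
  · subst h; simp [cls_refl]; norm_num [SimpleGraph.dist_self]
  · by_cases hc : cls u v
    · have : (coneUnionComplete m k).dist u v = 1 :=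
        SimpleGraph.dist_eq_one_iff_adj.mpr ((adj_iff u v).mpr ⟨h, hc⟩)
      rw [this]; simp [h, hc]; norm_num
    · have hu : u ≠ none := fun h' => hc (Or.inl h')
      have hv : v ≠ none := fun h' => hc (Or.inr (Or.inl h'))
      have h1 : (coneUnionComplete m k).Adj u none :=
        (adj_iff u none).mpr ⟨hu, Or.inr (Or.inl rfl)⟩
      have h2 : (coneUnionComplete m k).Adj none v :=
        (adj_iff none v).mpr ⟨fun h' => hv h'.symm, Or.inl rfl⟩
      have hw : (coneUnionComplete m k).dist u v ≤ 2 := by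
        have := SimpleGraph.dist_le
          (SimpleGraph.Walk.cons h1 (SimpleGraph.Walk.cons h2 SimpleGraph.Walk.nil))
        simpa using this
      have h0 : (coneUnionComplete m k).dist u v ≠ 0 := by
        intro h'
        rcases SimpleGraph.dist_eq_zero_iff_eq_or_not_reachable.mp h' with h'' | h''
        · exact h h''
        · exact h'' ⟨SimpleGraph.Walk.cons h1 (SimpleGraph.Walk.cons h2 SimpleGraph.Walk.nil)⟩
      have hne1 : (coneUnionComplete m k).dist u v ≠ 1 := by
        intro h'
        exact hc ((adj_iff u v).mp (SimpleGraph.dist_eq_one_iff_adj.mp h')).2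
      have : (coneUnionComplete m k).dist u v = 2 := by omega
      rw [this]; simp [h, hc]

lemma sum_ite_pull {β : Type*} [Fintype β] (p : Prop) [Decidable p] (f : β → ℝ) :
    ∑ j, (if p then f j else 0) = if p then ∑ j, f j else 0 := by
  split_ifs <;> simp

lemma sum_ite_two {α : Type*} [Fintype α] [DecidableEq α] {a b : α} (h : a ≠ b) (x y : ℝ) :
    ∑ j, (if j = a then x else if j = b then y else 0) = x + y := by
  have e : ∀ j : α, (if j = a then x else if j = b then y else 0) =
      (if j = a then x else 0) + (if j = b then y else 0) := by
    intro j
    by_cases h1 : j = a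
    · subst h1; simp [h]
    · by_cases h2 : j = b <;> simp [h1, h2, Ne.symm h]
  rw [Finset.sum_congr rfl fun j _ => e j, Finset.sum_add_distrib]
  simp

section Main

variable (m k : ℕ)

/-- the matrix of (right) eigenvectors, as columns -/
noncomputable def Pm : Matrix (Option (Fin (m+1) × Fin (k+1))) (Option (Fin (m+1) × Fin (k+1))) ℝ :=
  Matrix.of fun w b =>
    match b with
    | none => 1
    | some (i, j) =>
      match w with
      | none => if j = 0 ∧ i = 0 then ((m : ℝ)+1) * ((k : ℝ)+1) else 0
      | some (i', j') =>
        if j = 0 then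
          if i = 0 then -1
          else if i' = 0 then 1 else if i' = i then -1 else 0
        else if i' = i then (if j' = 0 then 1 else if j' = j then -1 else 0) else 0

/-- the inverse of `Pm` -/
noncomputable def Qm : Matrix (Option (Fin (m+1) × Fin (k+1))) (Option (Fin (m+1) × Fin (k+1))) ℝ :=
  Matrix.of fun b w =>
    match b with
    | none => 1 / (((m : ℝ)+1) * ((k : ℝ)+1) + 1)
    | some (i, j) =>
      match w with
      | none => if j = 0 ∧ i = 0 then 1 / (((m : ℝ)+1) * ((k : ℝ)+1) + 1) else 0
      | some (i', j') =>
        if j = 0 then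
          if i = 0 then -(1 / ((((m : ℝ)+1) * ((k : ℝ)+1) + 1) * (((m : ℝ)+1) * ((k : ℝ)+1))))
          else 1 / (((m : ℝ)+1) * ((k : ℝ)+1)) - (if i' = i then 1 / ((k : ℝ)+1) else 0)
        else if i' = i then 1 / ((k : ℝ)+1) - (if j' = j then 1 else 0) else 0

/-- the eigenvalues -/
noncomputable def df : Option (Fin (m+1) × Fin (k+1)) → ℝ := fun b =>
  match b with
  | none => 0
  | some (i, j) =>
    if j = 0 then
      if i = 0 then ((m : ℝ)+1) * ((k : ℝ)+1) + 1
      else 2 * (((m : ℝ)+1) * ((k : ℝ)+1) + 1) - 1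
    else 2 * (((m : ℝ)+1) * ((k : ℝ)+1) + 1) - ((k : ℝ)+1) - 1

/-- column sums of `Pm` -/
noncomputable def σf : Option (Fin (m+1) × Fin (k+1)) → ℝ := fun b =>
  if b = none then ((m : ℝ)+1) * ((k : ℝ)+1) + 1 else 0

/-- block sums of columns of `Pm` -/
noncomputable def βf (i : Fin (m+1)) : Option (Fin (m+1) × Fin (k+1)) → ℝ := fun b =>
  match b with
  | none => (k : ℝ)+1
  | some (i0, j0) =>
    if j0 = 0 then
      if i0 = 0 then -((k : ℝ)+1)
      else ((k : ℝ)+1) * (if i = 0 then 1 else if i = i0 then -1 else 0)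
    else 0

variable {m k}

lemma hβ (i : Fin (m+1)) (b : Option (Fin (m+1) × Fin (k+1))) :
    ∑ j', Pm m k (some (i, j')) b = βf m k i b := by
  rcases b with _ | ⟨i0, j0⟩
  · simp [Pm, βf]
  · by_cases hj0 : j0 = 0
    · subst hj0
      by_cases hi0 : i0 = 0
      · subst hi0
        simp [Pm, βf, Finset.sum_const, Finset.card_univ, mul_comm]
      · simp [Pm, βf, hi0, Finset.sum_const, Finset.card_univ, mul_comm]
    · simp only [Pm, βf, Matrix.of_apply, if_neg hj0]
      by_cases hii : i = i0
      · subst hii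
        simp only [eq_self_iff_true, if_true]
        rw [sum_ite_two (fun h => hj0 h.symm) 1 (-1)]
        ring
      · simp [hii]

lemma hσ (b : Option (Fin (m+1) × Fin (k+1))) :
    ∑ u, Pm m k u b = σf m k b := by
  rw [Fintype.sum_option, Fintype.sum_prod_type]
  rw [Finset.sum_congr rfl fun i' _ => hβ i' b]
  rcases b with _ | ⟨i0, j0⟩
  · simp [Pm, βf, σf, Finset.sum_const, Finset.card_univ]
    ring
  · by_cases hj0 : j0 = 0
    · subst hj0
      by_cases hi0 : i0 = 0
      · subst hi0
        simp [Pm, βf, σf, Finset.sum_const, Finset.card_univ]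
        ring
      · simp only [Pm, βf, σf, Matrix.of_apply, eq_self_iff_true, if_true, true_and,
          if_neg hi0]
        rw [← Finset.mul_sum, sum_ite_two (fun h => hi0 h.symm) 1 (-1)]
        simp
    · simp [Pm, βf, σf, hj0]

lemma hσ' (b : Option (Fin (m+1) × Fin (k+1))) :
    ∑ i', ∑ j', Pm m k (some (i', j')) b = σf m k b - Pm m k none b := by
  have h := hσ b
  rw [Fintype.sum_option, Fintype.sum_prod_type] at h
  linarith

lemma hA_none (f : Option (Fin (m+1) × Fin (k+1)) → ℝ) :
    ∑ u, (if cls none u then f u else 0) = ∑ u, f u := by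
  apply Finset.sum_congr rfl
  intro u _
  rw [if_pos (show cls none u from Or.inl rfl)]

lemma hA_some (f : Option (Fin (m+1) × Fin (k+1)) → ℝ) (i : Fin (m+1)) (j : Fin (k+1)) :
    ∑ u, (if cls (some (i, j)) u then f u else 0) = f none + ∑ j', f (some (i, j')) := by
  rw [Fintype.sum_option, Fintype.sum_prod_type,
    if_pos (show cls (some (i, j)) none from Or.inr (Or.inl rfl))]
  congr 1
  have e : ∀ (i' : Fin (m+1)) (j' : Fin (k+1)),
        (if cls (some (i, j)) (some (i', j')) then f (some (i', j')) else 0) =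
          if i' = i then f (some (i', j')) else 0 := by
    intro i' j'
    have : cls (some (i, j)) (some (i', j')) ↔ i' = i := by
      simp [cls, eq_comm]
    simp only [this]
  rw [Finset.sum_congr rfl fun i' _ => Finset.sum_congr rfl fun j' _ => e i' j']
  rw [Finset.sum_congr rfl fun i' _ => sum_ite_pull (i' = i) _]
  simp

lemma dist_sum (w : Option (Fin (m+1) × Fin (k+1)))
    (f : Option (Fin (m+1) × Fin (k+1)) → ℝ) :
    ∑ u, ((coneUnionComplete (m+1) (k+1)).dist w u : ℝ) * f u =
      2 * ∑ u, f u - f w - ∑ u, (if cls w u then f u else 0) := by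
  have e : ∀ u, ((coneUnionComplete (m+1) (k+1)).dist w u : ℝ) * f u =
      2 * f u - (if w = u then f u else 0) - (if cls w u then f u else 0) := by
    intro u; rw [dist_real]; split_ifs <;> ring
  rw [Finset.sum_congr rfl fun u _ => e u]
  rw [Finset.sum_sub_distrib, Finset.sum_sub_distrib, ← Finset.mul_sum]
  congr 2
  rw [Finset.sum_ite_eq]
  simp

lemma tr_eq (w : Option (Fin (m+1) × Fin (k+1))) :
    ∑ u, ((coneUnionComplete (m+1) (k+1)).dist w u : ℝ) =
      if w = none then ((m : ℝ)+1) * ((k : ℝ)+1) else ((k : ℝ)+1) * (2*(m : ℝ)+1) := by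
  have h : ∑ u, ((coneUnionComplete (m+1) (k+1)).dist w u : ℝ) =
      ∑ u, ((coneUnionComplete (m+1) (k+1)).dist w u : ℝ) * (fun _ => (1:ℝ)) u := by
    simp
  rw [h, dist_sum]
  rcases w with _ | ⟨i, j⟩
  · rw [hA_none]
    simp [Finset.card_univ]
    ring
  · rw [hA_some]
    simp [Finset.card_univ]
    ring

lemma hconst (c : ℝ) (b : Option (Fin (m+1) × Fin (k+1))) :
    ∑ i', ∑ j', c * Pm m k (some (i', j')) b = c * (σf m k b - Pm m k none b) := by
  rw [← hσ' b, Finset.mul_sum]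
  exact Finset.sum_congr rfl fun i' _ => by rw [Finset.mul_sum]

lemma hblock (i : Fin (m+1)) (b : Option (Fin (m+1) × Fin (k+1))) (c : ℝ) :
    ∑ i', ∑ j', (if i' = i then c * Pm m k (some (i', j')) b else 0) = c * βf m k i b := by
  rw [Finset.sum_congr rfl fun i' _ => sum_ite_pull (i' = i) _]
  simp only [Finset.sum_ite_eq', Finset.mem_univ, if_true]
  rw [← Finset.mul_sum, hβ]

lemma hpoint (i : Fin (m+1)) (j : Fin (k+1)) (b : Option (Fin (m+1) × Fin (k+1))) :
    ∑ i', ∑ j', (if i' = i ∧ j' = j then Pm m k (some (i', j')) b else 0)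
      = Pm m k (some (i, j)) b := by
  have e : ∀ (i' : Fin (m+1)) (j' : Fin (k+1)),
      (if i' = i ∧ j' = j then Pm m k (some (i', j')) b else 0) =
        if i' = i then (if j' = j then Pm m k (some (i', j')) b else 0) else 0 := by
    intro i' j'; rw [ite_and]
  rw [Finset.sum_congr rfl fun i' _ => Finset.sum_congr rfl fun j' _ => e i' j']
  rw [Finset.sum_congr rfl fun i' _ => sum_ite_pull (i' = i) _]
  simp only [Finset.sum_ite_eq', Finset.mem_univ, if_true]

lemma hLP : distLap (coneUnionComplete (m+1) (k+1)) * Pm m k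
    = Pm m k * Matrix.diagonal (df m k) := by
  have hsplit : distLap (coneUnionComplete (m+1) (k+1)) * Pm m k =
      Matrix.diagonal (fun v => ∑ u, ((coneUnionComplete (m+1) (k+1)).dist v u : ℝ)) * Pm m k -
        Matrix.of (fun u v => ((coneUnionComplete (m+1) (k+1)).dist u v : ℝ)) * Pm m k := by
    rw [distLap, Matrix.sub_mul]
  rw [hsplit]
  ext w b
  rw [Matrix.sub_apply, Matrix.diagonal_mul, Matrix.mul_diagonal, Matrix.mul_apply]
  simp only [Matrix.of_apply]
  rw [tr_eq, dist_sum w (fun u => Pm m k u b), hσ]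
  rcases w with _ | ⟨i, j⟩
  · rw [hA_none, hσ]
    simp only [if_pos rfl]
    rcases b with _ | ⟨i0, j0⟩
    · simp [Pm, σf, df] <;> (try field_simp) <;> (try ring) <;> (try (split_ifs <;> ring))
    · by_cases hj0 : j0 = 0
      · subst hj0
        by_cases hi0 : i0 = 0
        · subst hi0; simp [Pm, σf, df] <;> (try field_simp) <;> (try ring) <;> (try (split_ifs <;> ring))
        · simp [Pm, σf, df, hi0] <;> (try field_simp) <;> (try ring) <;> (try (split_ifs <;> ring))
      · simp [Pm, σf, df, hj0] <;> (try field_simp) <;> (try ring) <;> (try (split_ifs <;> ring))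
  · rw [hA_some (fun u => Pm m k u b) i j]
    rw [hβ i b]
    simp only [if_neg (Option.some_ne_none (i, j))]
    rcases b with _ | ⟨i0, j0⟩
    · simp [Pm, σf, df, βf] <;> (try field_simp) <;> (try ring) <;> (try (split_ifs <;> ring))
    · by_cases hj0 : j0 = 0
      · subst hj0
        by_cases hi0 : i0 = 0
        · subst hi0; simp [Pm, σf, df, βf] <;> (try field_simp) <;> (try ring) <;> (try (split_ifs <;> ring))
        · simp [Pm, σf, df, βf, hi0] <;> (try field_simp) <;> (try ring) <;> (try (split_ifs <;> ring))
      · simp [Pm, σf, df, βf, hj0] <;> (try field_simp) <;> (try ring) <;> (try (split_ifs <;> ring))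

lemma hQP : Qm m k * Pm m k = 1 := by
  have hN : ((m:ℝ)+1) * ((k:ℝ)+1) + 1 ≠ 0 := by positivity
  have hMK : ((m:ℝ)+1) * ((k:ℝ)+1) ≠ 0 := by positivity
  have hK : ((k:ℝ)+1) ≠ 0 := by positivity
  ext b b'
  rw [Matrix.mul_apply, Matrix.one_apply]
  rcases b with _ | ⟨i, j⟩
  · have e : ∀ w, Qm m k none w * Pm m k w b' =
        (1 / (((m:ℝ)+1) * ((k:ℝ)+1) + 1)) * Pm m k w b' := fun w => rfl
    rw [Finset.sum_congr rfl fun w _ => e w, ← Finset.mul_sum, hσ]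
    rcases b' with _ | ⟨i0, j0⟩
    · simp only [σf, if_pos rfl, ↓reduceIte]
      field_simp
    · simp [σf]
  · rw [Fintype.sum_option, Fintype.sum_prod_type]
    by_cases hj : j = 0
    · subst hj
      by_cases hi : i = 0
      · subst hi
        simp only [Qm, Matrix.of_apply, eq_self_iff_true, if_true, true_and, and_self]
        rw [hconst]
        rcases b' with _ | ⟨i0, j0⟩
        · simp [Pm, σf] <;> (try field_simp) <;> (try ring)
        · by_cases hj0 : j0 = 0
          · subst hj0
            by_cases hi0 : i0 = 0
            · subst hi0
              simp [Pm, σf] <;> (try field_simp) <;> (try ring)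
            · simp [Pm, σf, hi0, Prod.ext_iff, Ne.symm hi0] <;> (try field_simp) <;> (try ring)
          · simp [Pm, σf, hj0, Prod.ext_iff, Ne.symm hj0] <;> (try field_simp) <;> (try ring)
      · simp only [Qm, Matrix.of_apply, eq_self_iff_true, if_true, true_and, if_neg hi]
        have e2 : ∀ (i' : Fin (m+1)) (j' : Fin (k+1)),
            (1 / (((m:ℝ)+1) * ((k:ℝ)+1)) - if i' = i then 1 / ((k:ℝ)+1) else 0) *
                Pm m k (some (i', j')) b' =
              (1 / (((m:ℝ)+1) * ((k:ℝ)+1))) * Pm m k (some (i', j')) b' -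
                (if i' = i then (1 / ((k:ℝ)+1)) * Pm m k (some (i', j')) b' else 0) := by
          intro i' j'; split_ifs <;> ring
        rw [Finset.sum_congr rfl fun i' _ => Finset.sum_congr rfl fun j' _ => e2 i' j']
        rw [Finset.sum_congr rfl fun i' _ => Finset.sum_sub_distrib _ _, Finset.sum_sub_distrib]
        rw [hconst, hblock]
        rw [zero_mul, zero_add]
        rcases b' with _ | ⟨i0, j0⟩
        · simp [Pm, σf, βf] <;> (try field_simp) <;> (try ring)
        · by_cases hj0 : j0 = 0
          · subst hj0
            by_cases hi0 : i0 = 0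
            · subst hi0
              simp [Pm, σf, βf, hi, Prod.ext_iff] <;> (try field_simp) <;> (try ring)
            · by_cases hii : i = i0
              · subst hii
                simp [Pm, σf, βf, hi, hi0, Prod.ext_iff] <;> (try field_simp) <;> (try ring)
              · simp [Pm, σf, βf, hi, hi0, hii, Prod.ext_iff] <;> (try field_simp) <;> (try ring)
          · simp [Pm, σf, βf, hj0, Ne.symm hj0, Prod.ext_iff] <;> (try field_simp) <;> (try ring)
    · simp only [Qm, Matrix.of_apply, if_neg hj, if_neg (by simp [hj] : ¬((j:Fin (k+1)) = 0 ∧ i = 0))]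
      have e3 : ∀ (i' : Fin (m+1)) (j' : Fin (k+1)),
          (if i' = i then 1 / ((k:ℝ)+1) - (if j' = j then 1 else 0) else 0) *
              Pm m k (some (i', j')) b' =
            (if i' = i then (1 / ((k:ℝ)+1)) * Pm m k (some (i', j')) b' else 0) -
              (if i' = i ∧ j' = j then Pm m k (some (i', j')) b' else 0) := by
        intro i' j'
        by_cases h1 : i' = i <;> by_cases h2 : j' = j <;> simp [h1, h2] <;> ring
      rw [Finset.sum_congr rfl fun i' _ => Finset.sum_congr rfl fun j' _ => e3 i' j']
      rw [Finset.sum_congr rfl fun i' _ => Finset.sum_sub_distrib _ _, Finset.sum_sub_distrib]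
      rw [hblock, hpoint]
      rw [zero_mul, zero_add]
      rcases b' with _ | ⟨i0, j0⟩
      · simp [Pm, βf] <;> (try field_simp) <;> (try ring) <;>
          (try (split_ifs <;> field_simp <;> try ring))
      · by_cases hj0 : j0 = 0
        · subst hj0
          by_cases hi0 : i0 = 0
          · subst hi0
            simp [Pm, βf, hj, Prod.ext_iff, Ne.symm hj] <;> (try field_simp) <;> (try ring) <;>
              (try (split_ifs <;> field_simp <;> try ring))
          · by_cases hii : i = i0
            · subst hii
              simp [Pm, βf, hj, hi0, Prod.ext_iff, Ne.symm hj] <;> (try field_simp) <;>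
                (try ring) <;> (try (split_ifs <;> field_simp <;> try ring))
            · simp [Pm, βf, hj, hi0, hii, Prod.ext_iff, Ne.symm hj] <;> (try field_simp) <;>
                (try ring) <;> (try (split_ifs <;> field_simp <;> try ring))
        · by_cases hii : i = i0
          · subst hii
            by_cases hjj : j = j0
            · subst hjj
              simp [Pm, βf, hj, hj0, Prod.ext_iff] <;> (try field_simp) <;> (try ring) <;>
                (try (split_ifs <;> field_simp <;> try ring))
            · simp [Pm, βf, hj, hj0, hjj, Prod.ext_iff] <;> (try field_simp) <;> (try ring) <;>
                (try (split_ifs <;> field_simp <;> try ring))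
          · simp [Pm, βf, hj, hj0, hii, Prod.ext_iff] <;> (try field_simp) <;> (try ring) <;>
              (try (split_ifs <;> field_simp <;> try ring))

lemma charpoly_conj {n : Type*} [Fintype n] [DecidableEq n] (P D Q : Matrix n n ℝ)
    (hPQ : P * Q = 1) : (P * D * Q).charpoly = D.charpoly := by
  have h1 : (C : ℝ →+* ℝ[X]).mapMatrix P * (C : ℝ →+* ℝ[X]).mapMatrix Q = 1 := by
    rw [← _root_.map_mul, hPQ, _root_.map_one]
  have hs : (C : ℝ →+* ℝ[X]).mapMatrix P * Matrix.scalar n (X : ℝ[X]) *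
      (C : ℝ →+* ℝ[X]).mapMatrix Q = Matrix.scalar n (X : ℝ[X]) := by
    have hc := (Matrix.scalar_commute (X : ℝ[X]) (fun r' => Commute.all _ _)
      ((C : ℝ →+* ℝ[X]).mapMatrix P)).eq
    rw [← hc, mul_assoc, h1, mul_one]
  have key : Matrix.charmatrix (P * D * Q) =
      (C : ℝ →+* ℝ[X]).mapMatrix P * Matrix.charmatrix D * (C : ℝ →+* ℝ[X]).mapMatrix Q := by
    unfold Matrix.charmatrix
    rw [Matrix.mul_sub, Matrix.sub_mul, hs, _root_.map_mul, _root_.map_mul]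
  unfold Matrix.charpoly
  rw [key, Matrix.det_mul, Matrix.det_mul, mul_right_comm, ← Matrix.det_mul, h1,
    Matrix.det_one, one_mul]

lemma charpoly_diagonal {n : Type*} [Fintype n] [DecidableEq n] (d : n → ℝ) :
    (Matrix.diagonal d).charpoly = ∏ i, (X - C (d i)) := by
  unfold Matrix.charpoly
  have h : Matrix.charmatrix (Matrix.diagonal d) =
      Matrix.diagonal (fun i => (X : ℝ[X]) - C (d i)) := by
    ext i j
    by_cases hij : i = j
    · subst hij
      rw [Matrix.charmatrix_apply_eq, Matrix.diagonal_apply_eq, Matrix.diagonal_apply_eq]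
    · rw [Matrix.charmatrix_apply_ne _ _ _ hij, Matrix.diagonal_apply_ne _ hij,
        Matrix.diagonal_apply_ne _ hij, map_zero, neg_zero]
  rw [h, Matrix.det_diagonal]

theorem aux (m k : ℕ) :
    (distLap (coneUnionComplete (m+1) (k+1))).charpoly =
      X * (X - C (((m:ℝ)+1) * ((k:ℝ)+1) + 1)) *
        (X - C (2 * (((m:ℝ)+1) * ((k:ℝ)+1) + 1) - 1)) ^ m *
        (X - C (2 * (((m:ℝ)+1) * ((k:ℝ)+1) + 1) - ((k:ℝ)+1) - 1)) ^ ((m+1) * k) := by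
  have hQP' : Qm m k * Pm m k = 1 := hQP
  have hPQ : Pm m k * Qm m k = 1 := mul_eq_one_comm.mp hQP'
  have hL : distLap (coneUnionComplete (m+1) (k+1)) =
      Pm m k * Matrix.diagonal (df m k) * Qm m k := by
    calc distLap (coneUnionComplete (m+1) (k+1))
        = distLap (coneUnionComplete (m+1) (k+1)) * (Pm m k * Qm m k) := by
          rw [hPQ, Matrix.mul_one]
      _ = distLap (coneUnionComplete (m+1) (k+1)) * Pm m k * Qm m k := by
          rw [Matrix.mul_assoc]
      _ = _ := by rw [hLP]
  rw [hL, charpoly_conj _ _ _ hPQ, charpoly_diagonal]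
  rw [Fintype.prod_option, Fintype.prod_prod_type]
  have h0 : (X : ℝ[X]) - C (df m k none) = X := by
    simp [df]
  have hj : ∀ i : Fin (m+1), ∏ j : Fin (k+1), ((X : ℝ[X]) - C (df m k (some (i, j)))) =
      (X - C (if i = 0 then ((m:ℝ)+1) * ((k:ℝ)+1) + 1
        else 2 * (((m:ℝ)+1) * ((k:ℝ)+1) + 1) - 1)) *
        (X - C (2 * (((m:ℝ)+1) * ((k:ℝ)+1) + 1) - ((k:ℝ)+1) - 1)) ^ k := by
    intro i
    rw [Fin.prod_univ_succ]
    have h1 : df m k (some (i, 0)) = (if i = 0 then ((m:ℝ)+1) * ((k:ℝ)+1) + 1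
        else 2 * (((m:ℝ)+1) * ((k:ℝ)+1) + 1) - 1) := by
      simp [df]
    have h2 : ∀ j : Fin k, (X : ℝ[X]) - C (df m k (some (i, j.succ))) =
        X - C (2 * (((m:ℝ)+1) * ((k:ℝ)+1) + 1) - ((k:ℝ)+1) - 1) := by
      intro j
      simp [df, Fin.succ_ne_zero]
    rw [h1, Finset.prod_congr rfl fun j _ => h2 j, Finset.prod_const, Finset.card_univ,
      Fintype.card_fin]
  rw [h0, Finset.prod_congr rfl fun i _ => hj i, Finset.prod_mul_distrib, Finset.prod_const,
    Finset.card_univ, Fintype.card_fin]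
  have h3 : ∏ i : Fin (m+1), ((X : ℝ[X]) - C (if i = 0 then ((m:ℝ)+1) * ((k:ℝ)+1) + 1
      else 2 * (((m:ℝ)+1) * ((k:ℝ)+1) + 1) - 1)) =
      (X - C (((m:ℝ)+1) * ((k:ℝ)+1) + 1)) *
        (X - C (2 * (((m:ℝ)+1) * ((k:ℝ)+1) + 1) - 1)) ^ m := by
    have h4 : ∀ i : Fin m, ((X : ℝ[X]) - C (if i.succ = 0 then ((m:ℝ)+1) * ((k:ℝ)+1) + 1
        else 2 * (((m:ℝ)+1) * ((k:ℝ)+1) + 1) - 1)) =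
        X - C (2 * (((m:ℝ)+1) * ((k:ℝ)+1) + 1) - 1) := by
      intro i
      simp [Fin.succ_ne_zero]
    rw [Fin.prod_univ_succ, Finset.prod_congr rfl fun i _ => h4 i, Finset.prod_const,
      Finset.card_univ, Fintype.card_fin]
    simp
  rw [h3, ← pow_mul]
  ring

end Main

end Stmt6Aux

/-- The distance Laplacian characteristic polynomial of the power graph of
`ℤ_p × ℤ_p × ℤ_p`, i.e. of `K₁ ∨ ((p²+p+1) copies of K_{p-1})`, is
`x (x - p³) (x - 2p³ + 1)^{p²+p} (x - 2p³ + p)^{p³-p²-p-2}`. -/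
theorem stmt6 (p : ℕ) (hp : p.Prime) :
    (distLap (coneUnionComplete (p ^ 2 + p + 1) (p - 1))).charpoly =
      X * (X - C ((p : ℝ) ^ 3)) * (X - C (2 * (p : ℝ) ^ 3 - 1)) ^ (p ^ 2 + p) *
        (X - C (2 * (p : ℝ) ^ 3 - p)) ^ (p ^ 3 - p ^ 2 - p - 2) := by
  have h2 : 2 ≤ p := hp.two_le
  obtain ⟨q, rfl⟩ : ∃ q, p = q + 2 := ⟨p - 2, by omega⟩
  rw [show (q + 2) - 1 = q + 1 from by omega]
  rw [show (q+2) ^ 3 - (q+2) ^ 2 - (q+2) - 2 = ((q+2) ^ 2 + (q+2) + 1) * q from by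
    have h4 : ∀ a b c : ℕ, c + (a + q + 4) = b → b - a - (q + 2) - 2 = c := by
      intro a b c h; omega
    exact h4 ((q+2)^2) ((q+2)^3) (((q+2)^2 + (q+2) + 1) * q) (by ring)]
  rw [show (q+2) ^ 2 + (q+2) + 1 = ((q+2) ^ 2 + (q+2)) + 1 from rfl]
  rw [Stmt6Aux.aux ((q+2) ^ 2 + (q+2)) q]
  have c1 : ((((q+2) ^ 2 + (q+2) : ℕ) : ℝ) + 1) * (((q : ℕ) : ℝ) + 1) + 1
      = ((q + 2 : ℕ) : ℝ) ^ 3 := by push_cast; ring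
  rw [c1]
  have c3 : (((q+2) ^ 2 + (q+2)) + 1) * q = ((q+2) ^ 2 + (q+2) + 1) * q := rfl
  rw [c3]
  have c2 : 2 * (((q + 2 : ℕ) : ℝ) ^ 3) - (((q : ℕ) : ℝ) + 1) - 1
      = 2 * ((q + 2 : ℕ) : ℝ) ^ 3 - ((q + 2 : ℕ) : ℝ) := by push_cast; ring
  rw [c2]
end

section
/- Let p be a prime. The Laplacian characteristic polynomial of the graph K_1 ∨ (K_{p-1} ∪ ⋯ ∪ K_{p-1}) with p²+p+1 copies of K_{p-1} (which is the power graph of Z_p × Z_p × Z_p) is x(x - p³)(x - 1)^{p²+p}(x - p)^{p³ - p² - p - 2}. -/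
open Polynomial

/-! ### Auxiliary material for the proof -/

open Matrix
open scoped Classical

noncomputable section StmtSevenAux

namespace StmtSevenAux

/-! #### Adjacency and degrees -/

variable {m k : ℕ}

lemma adj_iff (u v : Option (Fin m × Fin k)) :
    (coneUnionComplete m k).Adj u v ↔ u ≠ v ∧ (u = none ∨ v = none ∨
      Option.map Prod.fst u = Option.map Prod.fst v) := by
  simp only [coneUnionComplete, SimpleGraph.fromRel_adj]
  refine and_congr_right fun _ => ?_
  constructor
  · rintro ((h | h) | (h | h))
    · exact Or.inl h
    · exact Or.inr (Or.inr h)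
    · exact Or.inr (Or.inl h)
    · exact Or.inr (Or.inr h.symm)
  · rintro (h | h | h)
    · exact Or.inl (Or.inl h)
    · exact Or.inr (Or.inl h)
    · exact Or.inl (Or.inr h)

lemma adj_none_some (z : Fin m × Fin k) : (coneUnionComplete m k).Adj none (some z) := by
  simp [adj_iff]

lemma adj_some_some (i j : Fin m) (a b : Fin k) :
    (coneUnionComplete m k).Adj (some (i,a)) (some (j,b)) ↔ i = j ∧ a ≠ b := by
  rw [adj_iff]
  simp only [Option.map_some, ne_eq, Option.some.injEq, Prod.mk.injEq, reduceCtorEq, false_or]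
  constructor
  · rintro ⟨h, h1⟩
    exact ⟨h1, fun hab => h ⟨h1, hab⟩⟩
  · rintro ⟨rfl, h⟩
    exact ⟨fun hc => h hc.2, rfl⟩

lemma deg_none : (coneUnionComplete m k).degree none = m * k := by
  rw [SimpleGraph.degree]
  have h : (coneUnionComplete m k).neighborFinset none = Finset.univ.erase none := by
    ext v
    cases v <;> simp [SimpleGraph.mem_neighborFinset, adj_iff]
  rw [h, Finset.card_erase_of_mem (Finset.mem_univ _), Finset.card_univ]
  simp [Nat.mul_comm]

lemma deg_some (i : Fin m) (a : Fin k) :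
    (coneUnionComplete m k).degree (some (i,a)) = k := by
  rw [SimpleGraph.degree]
  have h : (coneUnionComplete m k).neighborFinset (some (i,a)) =
      insert none ((Finset.univ.image fun b => (some (i,b) : Option (Fin m × Fin k))).erase
        (some (i,a))) := by
    ext v
    match v with
    | none => simp [SimpleGraph.mem_neighborFinset, adj_iff]
    | some (j,b) =>
      simp only [SimpleGraph.mem_neighborFinset, adj_some_some, Finset.mem_insert,
        reduceCtorEq, Finset.mem_erase, Finset.mem_image, Finset.mem_univ, true_and, false_or,
        ne_eq, Option.some.injEq, Prod.mk.injEq]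
      constructor
      · rintro ⟨rfl, hab⟩
        exact ⟨fun hc => hab hc.2.symm, ⟨b, rfl, rfl⟩⟩
      · rintro ⟨hne, ⟨b', hb1, hb2⟩⟩
        subst hb1; subst hb2
        exact ⟨rfl, fun hab => hne ⟨rfl, hab.symm⟩⟩
  rw [h, Finset.card_insert_of_notMem (by simp), Finset.card_erase_of_mem
    (Finset.mem_image.2 ⟨a, Finset.mem_univ _, rfl⟩),
    Finset.card_image_of_injective _ (fun x y hxy => by simpa using hxy), Finset.card_univ]
  have hk : 0 < k := a.pos
  simp [Fintype.card_fin]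
  omega

/-! #### Evaluating the characteristic polynomial -/

lemma eval_charpoly {n : Type*} [Fintype n] [DecidableEq n] (M : Matrix n n ℝ) (x : ℝ) :
    M.charpoly.eval x = (Matrix.diagonal (fun _ => x) - M).det := by
  have h := RingHom.map_det (evalRingHom x) M.charmatrix
  simp only [coe_evalRingHom] at h
  rw [Matrix.charpoly, h]
  congr 1
  ext i j
  by_cases hij : i = j <;>
    simp [Matrix.charmatrix_apply, Matrix.diagonal, hij, RingHom.mapMatrix_apply]

/-! #### The small block and its inverse -/

variable (x : ℝ)

/-- all-ones matrix -/
def Jmat (k : ℕ) : Matrix (Fin k) (Fin k) ℝ := Matrix.of fun _ _ => 1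

/-- the block `(x-k-1)•1 + J` -/
def Bmat (k : ℕ) (x : ℝ) : Matrix (Fin k) (Fin k) ℝ := (x - k - 1) • 1 + Jmat k

lemma Jmat_mul_Jmat : Jmat k * Jmat k = (k : ℝ) • Jmat k := by
  ext i j
  simp [Jmat, Matrix.mul_apply]

lemma Bmat_mul (c d : ℝ) :
    Bmat k x * (c • 1 + d • Jmat k) =
      ((x - k - 1) * c) • (1 : Matrix (Fin k) (Fin k) ℝ)
        + ((x - k - 1) * d + c + d * k) • Jmat k := by
  simp only [Bmat, Matrix.add_mul, Matrix.mul_add, Matrix.smul_mul, Matrix.mul_smul,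
    Matrix.one_mul, Matrix.mul_one, Jmat_mul_Jmat, smul_smul]
  module

lemma mul_Bmat (c d : ℝ) :
    (c • 1 + d • Jmat k) * Bmat k x =
      ((x - k - 1) * c) • (1 : Matrix (Fin k) (Fin k) ℝ)
        + ((x - k - 1) * d + c + d * k) • Jmat k := by
  simp only [Bmat, Matrix.add_mul, Matrix.mul_add, Matrix.smul_mul, Matrix.mul_smul,
    Matrix.one_mul, Matrix.mul_one, Jmat_mul_Jmat, smul_smul]
  module

def BmatInv (k : ℕ) (x : ℝ) : Matrix (Fin k) (Fin k) ℝ :=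
  (x - k - 1)⁻¹ • 1 + (-(((x - k - 1) * (x - 1))⁻¹)) • Jmat k

lemma Bmat_inv_coeffs (hx1 : x ≠ 1) (hxk : x ≠ (k : ℝ) + 1) :
    (x - k - 1) * (x - k - 1)⁻¹ = 1 ∧
    (x - k - 1) * (-(((x - k - 1) * (x - 1))⁻¹)) + (x - k - 1)⁻¹
      + (-(((x - k - 1) * (x - 1))⁻¹)) * k = 0 := by
  have h1 : x - 1 ≠ 0 := sub_ne_zero.2 hx1
  have h2 : x - (k : ℝ) - 1 ≠ 0 := by
    intro h; apply hxk; linarith [sub_eq_zero.1 (by linarith : x - ((k : ℝ) + 1) = 0)]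
  constructor
  · field_simp
  · field_simp
    ring

variable {x}

def invertibleBmat (hx1 : x ≠ 1) (hxk : x ≠ (k : ℝ) + 1) : Invertible (Bmat k x) := by
  obtain ⟨h1, h2⟩ := Bmat_inv_coeffs x hx1 hxk
  refine ⟨BmatInv k x, ?_, ?_⟩
  · rw [BmatInv, mul_Bmat, h1, h2]; simp
  · rw [BmatInv, Bmat_mul, h1, h2]; simp

lemma det_Bmat (hk : 0 < k) (hxk : x ≠ (k : ℝ) + 1) :
    (Bmat k x).det = (x - k - 1) ^ (k - 1) * (x - 1) := by
  have h2 : x - (k : ℝ) - 1 ≠ 0 := by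
    intro h; apply hxk; linarith [sub_eq_zero.1 (by linarith : x - ((k : ℝ) + 1) = 0)]
  have hJ : Jmat k = ((x - k - 1)) • (Matrix.replicateCol Unit (fun _ => (x - k - 1)⁻¹) *
      Matrix.replicateRow Unit (fun _ => (1 : ℝ))) := by
    ext i j
    simp [Jmat, Matrix.mul_apply, h2]
  have : Bmat k x = (x - k - 1) • (1 + Matrix.replicateCol Unit (fun _ => (x - k - 1)⁻¹) *
      Matrix.replicateRow Unit (fun _ => (1 : ℝ))) := by
    rw [Bmat, smul_add, ← hJ]
  rw [this, Matrix.det_smul, Matrix.det_one_add_replicateCol_mul_replicateRow]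
  simp only [dotProduct, Finset.sum_const, Finset.card_univ, Fintype.card_fin,
    nsmul_eq_mul]
  have hk' : (x - (k:ℝ) - 1) ^ k = (x - k - 1) ^ (k - 1) * (x - k - 1) := by
    rw [← pow_succ]; congr 1; omega
  rw [hk']
  field_simp
  ring

end StmtSevenAux

namespace StmtSevenAux

/-! #### The big block matrix -/

section main
variable (m k : ℕ) (x : ℝ)

def Dmat : Matrix (Fin m × Fin k) (Fin m × Fin k) ℝ :=
  Matrix.of fun u v => if u.1 = v.1 then (if u.2 = v.2 then x - k else 1) else 0

lemma Dmat_eq : Dmat m k x =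
    (Matrix.reindexAlgEquiv ℝ ℝ (Equiv.prodComm (Fin k) (Fin m)))
      (Matrix.blockDiagonal fun _ : Fin m => Bmat k x) := by
  ext ⟨i, a⟩ ⟨j, b⟩
  simp only [Dmat, Matrix.of_apply, Matrix.reindexAlgEquiv_apply, Matrix.reindex_apply,
    Matrix.submatrix_apply, Equiv.prodComm_symm, Equiv.prodComm_apply, Prod.swap_prod_mk,
    Matrix.blockDiagonal_apply, Bmat, Jmat, Matrix.add_apply, Matrix.smul_apply,
    Matrix.one_apply, smul_eq_mul]
  by_cases hij : i = j <;> by_cases hab : a = b <;> simp [hij, hab]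

def invertibleDmat (hx1 : x ≠ 1) (hxk : x ≠ (k : ℝ) + 1) : Invertible (Dmat m k x) := by
  rw [Dmat_eq]
  letI : Invertible (Bmat k x) := invertibleBmat hx1 hxk
  letI : Invertible (Matrix.blockDiagonal fun _ : Fin m => Bmat k x) :=
    ⟨Matrix.blockDiagonal fun _ => ⅟(Bmat k x),
     by rw [← Matrix.blockDiagonal_mul]; simp only [invOf_mul_self];
        exact Matrix.blockDiagonal_one,
     by rw [← Matrix.blockDiagonal_mul]; simp only [mul_invOf_self];
        exact Matrix.blockDiagonal_one⟩
  exact Invertible.map (Matrix.reindexAlgEquiv ℝ ℝ (Equiv.prodComm (Fin k) (Fin m))) _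

lemma det_Dmat (hk : 0 < k) (hxk : x ≠ (k : ℝ) + 1) :
    (Dmat m k x).det = ((x - k - 1) ^ (k - 1) * (x - 1)) ^ m := by
  rw [Dmat_eq, Matrix.reindexAlgEquiv_apply, Matrix.det_reindex_self,
    Matrix.det_blockDiagonal, det_Bmat hk hxk]
  simp

lemma colsum_Dmat (v : Fin m × Fin k) : ∑ u, Dmat m k x u v = x - 1 := by
  rw [Fintype.sum_prod_type]
  have hb : ∀ w : Fin k, (∑ b : Fin k, if b = w then x - k else (1:ℝ)) = x - 1 := by
    intro w
    have : ∀ b : Fin k, (if b = w then x - (k:ℝ) else 1) =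
        (if b = w then x - k - 1 else 0) + 1 := fun b => by split <;> ring
    simp only [this, Finset.sum_add_distrib, Finset.sum_ite_eq', Finset.mem_univ, if_true,
      Finset.sum_const, Finset.card_univ, Fintype.card_fin, nsmul_eq_mul, mul_one]
    ring
  have hrow : ∀ j : Fin m, (∑ b : Fin k, Dmat m k x (j, b) v) =
      if j = v.1 then x - 1 else 0 := by
    intro j
    by_cases hj : j = v.1
    · simp only [Dmat, Matrix.of_apply, hj, if_true]
      exact hb v.2
    · simp [Dmat, hj]
  simp only [hrow, Finset.sum_ite_eq', Finset.mem_univ, if_true]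

lemma reindexed_matrix :
    (Matrix.reindex (Equiv.optionEquivSumPUnit (Fin m × Fin k))
        (Equiv.optionEquivSumPUnit (Fin m × Fin k)))
      (Matrix.diagonal (fun _ => x) - lapMat (coneUnionComplete m k)) =
    Matrix.fromBlocks (Dmat m k x) (Matrix.of fun _ _ => (1:ℝ))
      (Matrix.of fun _ _ => (1:ℝ)) (Matrix.of fun _ _ => (x - m * k : ℝ)) := by
  ext i j
  rcases i with u | _ <;> rcases j with v | _
  · obtain ⟨i, a⟩ := u; obtain ⟨j, b⟩ := v
    simp only [Matrix.reindex_apply, Matrix.submatrix_apply, Equiv.symm,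
      Equiv.optionEquivSumPUnit, Matrix.sub_apply, Matrix.diagonal_apply, lapMat,
      Matrix.of_apply, Matrix.fromBlocks_apply₁₁, Dmat]
    by_cases hij : i = j <;> by_cases hab : a = b
    · subst hij; subst hab
      simp [deg_some, adj_some_some]
      convert deg_some i a
      unfold SimpleGraph.degree SimpleGraph.neighborFinset; congr 1
    · subst hij
      simp [Option.some.injEq, Prod.mk.injEq, hab, adj_some_some, deg_some]
    · simp [Option.some.injEq, Prod.mk.injEq, hij, adj_some_some]
    · simp [Option.some.injEq, Prod.mk.injEq, hij, adj_some_some]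
  · obtain ⟨i, a⟩ := u
    simp [lapMat, adj_iff, Equiv.optionEquivSumPUnit]
  · obtain ⟨j, b⟩ := v
    simp [lapMat, adj_iff, Equiv.optionEquivSumPUnit]
  · simp [lapMat, adj_iff, deg_none, Equiv.optionEquivSumPUnit]

end main

/-! #### The determinant of `x·I - L` -/

lemma det_main (m k : ℕ) (x : ℝ) (hk : 0 < k) (hx1 : x ≠ 1) (hxk : x ≠ (k : ℝ) + 1) :
    (Matrix.diagonal (fun _ => x) - lapMat (coneUnionComplete m k)).det
      = ((x - k - 1) ^ (k - 1) * (x - 1)) ^ m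
          * ((x - m * k) - (x - 1)⁻¹ * (m * k)) := by
  have hx1' : x - 1 ≠ 0 := sub_ne_zero.2 hx1
  rw [← Matrix.det_reindex_self (Equiv.optionEquivSumPUnit (Fin m × Fin k))
    (Matrix.diagonal (fun _ => x) - lapMat (coneUnionComplete m k)), reindexed_matrix]
  letI := invertibleDmat m k x hx1 hxk
  rw [Matrix.det_fromBlocks₁₁]
  set Cm : Matrix Unit (Fin m × Fin k) ℝ := Matrix.of fun _ _ => 1 with hCm
  set Bm : Matrix (Fin m × Fin k) Unit ℝ := Matrix.of fun _ _ => 1 with hBm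
  have hCD : Cm * Dmat m k x = (x - 1) • Cm := by
    ext w v
    simp [hCm, Matrix.mul_apply, colsum_Dmat]
  have hCinv : Cm * ⅟(Dmat m k x) = (x - 1)⁻¹ • Cm := by
    have h1 : Cm * Dmat m k x * ⅟(Dmat m k x) = Cm := by
      rw [Matrix.mul_assoc, mul_invOf_self, Matrix.mul_one]
    rw [hCD, Matrix.smul_mul] at h1
    calc Cm * ⅟(Dmat m k x) = (x - 1)⁻¹ • ((x - 1) • (Cm * ⅟(Dmat m k x))) := by
          rw [smul_smul, inv_mul_cancel₀ hx1', one_smul]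
      _ = (x - 1)⁻¹ • Cm := by rw [h1]
  have hCB : Cm * Bm = Matrix.of fun _ _ => ((m * k : ℕ) : ℝ) := by
    ext w v
    simp [hCm, hBm, Matrix.mul_apply]
  rw [det_Dmat m k x hk hxk, hCinv, Matrix.smul_mul, hCB, Matrix.det_unique]
  simp only [Matrix.sub_apply, Matrix.smul_apply, Matrix.of_apply, smul_eq_mul]
  push_cast
  ring

/-! #### Natural-number identities -/

lemma natId1 (p : ℕ) (hp2 : 2 ≤ p) : (p ^ 2 + p + 1) * (p - 1) = p ^ 3 - 1 := by
  obtain ⟨q, rfl⟩ : ∃ q, p = q + 2 := ⟨p - 2, by omega⟩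
  have h3 : (q + 2) ^ 3 = q ^ 3 + 6 * q ^ 2 + 12 * q + 8 := by ring
  have hr : ((q + 2) ^ 2 + (q + 2) + 1) * (q + 2 - 1) = q ^ 3 + 6 * q ^ 2 + 12 * q + 7 := by
    rw [show q + 2 - 1 = q + 1 from rfl]; ring
  rw [hr, h3]
  generalize q ^ 3 = a
  generalize q ^ 2 = b
  omega

lemma natId2 (p : ℕ) (hp2 : 2 ≤ p) :
    (p - 2) * (p ^ 2 + p + 1) = p ^ 3 - p ^ 2 - p - 2 := by
  obtain ⟨q, rfl⟩ : ∃ q, p = q + 2 := ⟨p - 2, by omega⟩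
  have h3 : (q + 2) ^ 3 = q ^ 3 + 6 * q ^ 2 + 12 * q + 8 := by ring
  have h2 : (q + 2) ^ 2 = q ^ 2 + 4 * q + 4 := by ring
  have hr : (q + 2 - 2) * ((q + 2) ^ 2 + (q + 2) + 1) = q ^ 3 + 5 * q ^ 2 + 7 * q := by
    rw [show q + 2 - 2 = q from rfl]; ring
  rw [hr, h3, h2]
  generalize q ^ 3 = a
  generalize q ^ 2 = b
  omega

end StmtSevenAux

end StmtSevenAux

open StmtSevenAux in
/-- The Laplacian characteristic polynomial of `K₁ ∨ ((p²+p+1) copies of K_{p-1})`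
(the power graph of `ℤ_p × ℤ_p × ℤ_p`) is `x (x - p³) (x - 1)^{p²+p} (x - p)^{p³-p²-p-2}`. -/
theorem stmt7 (p : ℕ) (hp : p.Prime) :
    (lapMat (coneUnionComplete (p ^ 2 + p + 1) (p - 1))).charpoly =
      X * (X - C ((p : ℝ) ^ 3)) * (X - C 1) ^ (p ^ 2 + p) *
        (X - C ((p : ℝ))) ^ (p ^ 3 - p ^ 2 - p - 2) := by
  have hp2 : 2 ≤ p := hp.two_le
  have hk : 0 < p - 1 := by omega
  have emk : (p ^ 2 + p + 1) * (p - 1) = p ^ 3 - 1 := natId1 p hp2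
  have eexp : (p - 2) * (p ^ 2 + p + 1) = p ^ 3 - p ^ 2 - p - 2 := natId2 p hp2
  have ek1 : p - 1 - 1 = p - 2 := by omega
  have hp3 : 1 ≤ p ^ 3 := Nat.one_le_pow _ _ (by omega)
  -- reduce to evaluation
  apply Polynomial.eq_of_infinite_eval_eq
  apply Set.Infinite.mono (s := ({1, (p : ℝ)} : Set ℝ)ᶜ)
  swap
  · exact Set.Finite.infinite_compl ((Set.finite_singleton _).insert _)
  intro x hx
  simp only [Set.mem_compl_iff, Set.mem_insert_iff, Set.mem_singleton_iff, not_or] at hx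
  obtain ⟨hx1, hxp⟩ := hx
  simp only [Set.mem_setOf_eq]
  have hx1' : x - 1 ≠ 0 := sub_ne_zero.2 hx1
  have hcast1 : ((p - 1 : ℕ) : ℝ) = (p : ℝ) - 1 := by
    push_cast [Nat.cast_sub (by omega : 1 ≤ p)]; ring
  have hxk : x ≠ ((p - 1 : ℕ) : ℝ) + 1 := by
    rw [hcast1]; intro h; apply hxp; linarith
  rw [StmtSevenAux.eval_charpoly, det_main _ _ x hk hx1 hxk]
  have hmk : (((p ^ 2 + p + 1) * (p - 1) : ℕ) : ℝ) = (p : ℝ) ^ 3 - 1 := by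
    rw [emk]; push_cast [Nat.cast_sub hp3]; ring
  have hxp' : x - ((p - 1 : ℕ) : ℝ) - 1 = x - p := by rw [hcast1]; ring
  rw [ek1, hxp']
  -- evaluate RHS
  simp only [eval_mul, eval_pow, eval_sub, eval_X, eval_C]
  -- exponent juggling
  rw [← eexp]
  have hpow : ((x - (p : ℝ)) ^ (p - 2) * (x - 1)) ^ (p ^ 2 + p + 1)
      = (x - (p : ℝ)) ^ ((p - 2) * (p ^ 2 + p + 1)) * ((x - 1) ^ (p ^ 2 + p) * (x - 1)) := by
    rw [mul_pow, ← pow_mul, pow_succ (x - 1) (p ^ 2 + p)]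
  rw [hpow]
  have hcastmk : ((p ^ 2 + p + 1 : ℕ) : ℝ) * ((p - 1 : ℕ) : ℝ) = (p : ℝ) ^ 3 - 1 := by
    rw [← Nat.cast_mul, hmk]
  rw [hcastmk]
  generalize (p - 2) * (p ^ 2 + p + 1) = E
  generalize p ^ 2 + p = F
  field_simp
  ring
end

section
/- For a connected graph G on n ≥ 2 vertices, the second smallest distance Laplacian eigenvalue satisfies ∂^L_{n-1}(G) ≥ n, i.e., every nonzero eigenvalue of D^L(G) is at least n. -/
/-!
Proof idea: `D^L(G)` is the Laplacian of the complete graph with edge weights `d(i, j) ≥ 1`.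
An eigenvector `x` for a nonzero eigenvalue `μ` is orthogonal to the all-ones vector, so
`2 μ ‖x‖² = ∑ᵢⱼ d(i, j) (xᵢ - xⱼ)² ≥ ∑ᵢⱼ (xᵢ - xⱼ)² = 2 n ‖x‖² - 2 (∑ᵢ xᵢ)² = 2 n ‖x‖²`.
-/

open Polynomial

open Finset Matrix

theorem Matrix.exists_mulVec_eq_smul_of_isRoot_charpoly {n K : Type*} [Fintype n]
    [DecidableEq n] [Field K] {M : Matrix n n K} {μ : K} (h : M.charpoly.IsRoot μ) :
    ∃ v ≠ 0, M *ᵥ v = μ • v := by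
  obtain ⟨v, hv⟩ := ((Module.End.hasEigenvalue_iff_isRoot_charpoly M.toLin' μ).2
    (by rwa [Matrix.charpoly_toLin'])).exists_hasEigenvector
  exact ⟨v, hv.2, by simpa using Module.End.mem_eigenspace_iff.1 hv.1⟩

theorem Matrix.sum_sum_sub_sq {ι : Type*} [Fintype ι] (x : ι → ℝ) :
    ∑ i, ∑ j, (x i - x j) ^ 2 = 2 * Fintype.card ι * (x ⬝ᵥ x) - 2 * (∑ i, x i) ^ 2 := by
  have hexpand : ∀ i j, (x i - x j) ^ 2 = x i * x i + x j * x j - 2 * x i * x j := fun i j => by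
    ring
  simp only [hexpand, sum_add_distrib, sum_sub_distrib, sum_const, card_univ, nsmul_eq_mul,
    dotProduct, ← mul_sum, ← sum_mul]
  ring

namespace Matrix

variable {V : Type*} [Fintype V] [DecidableEq V]

noncomputable def weightedLap (w : V → V → ℝ) : Matrix V V ℝ :=
  diagonal (fun v => ∑ u, w v u) - of w

variable {w : V → V → ℝ}

theorem weightedLap_mulVec_apply (x : V → ℝ) (i : V) :
    (weightedLap w *ᵥ x) i = ∑ j, w i j * (x i - x j) := by
  rw [weightedLap, sub_mulVec, Pi.sub_apply, mulVec_diagonal, sum_mul]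
  simp only [mulVec, dotProduct, of_apply, mul_sub, sum_sub_distrib]

theorem sum_weightedLap_mulVec (hw : ∀ i j, w i j = w j i) (x : V → ℝ) :
    ∑ i, (weightedLap w *ᵥ x) i = 0 := by
  have hswap : ∑ i, ∑ j, w i j * (x i - x j) = ∑ i, ∑ j, w i j * (x j - x i) := by
    rw [sum_comm]
    exact sum_congr rfl fun i _ => sum_congr rfl fun j _ => by rw [hw]
  have hneg : ∑ i, ∑ j, w i j * (x j - x i) = -∑ i, ∑ j, w i j * (x i - x j) := by
    simp only [← sum_neg_distrib, ← mul_neg, neg_sub]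
  simp only [weightedLap_mulVec_apply]
  linarith

theorem two_mul_dotProduct_weightedLap_mulVec (hw : ∀ i j, w i j = w j i) (x : V → ℝ) :
    2 * (x ⬝ᵥ weightedLap w *ᵥ x) = ∑ i, ∑ j, w i j * (x i - x j) ^ 2 := by
  have hform : x ⬝ᵥ weightedLap w *ᵥ x = ∑ i, ∑ j, w i j * (x i * (x i - x j)) := by
    simp only [dotProduct, weightedLap_mulVec_apply, mul_sum]
    exact sum_congr rfl fun i _ => sum_congr rfl fun j _ => by ring
  have hswap : x ⬝ᵥ weightedLap w *ᵥ x = ∑ i, ∑ j, w i j * (x j * (x j - x i)) := by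
    rw [hform, sum_comm]
    exact sum_congr rfl fun i _ => sum_congr rfl fun j _ => by rw [hw]
  rw [two_mul]
  nth_rewrite 1 [hform]
  rw [hswap, ← sum_add_distrib]
  refine sum_congr rfl fun i _ => ?_
  rw [← sum_add_distrib]
  exact sum_congr rfl fun j _ => by ring

theorem card_mul_le_of_weightedLap_mulVec_eq_smul (hw : ∀ i j, w i j = w j i) {c : ℝ}
    (hc : ∀ i j, i ≠ j → c ≤ w i j) {μ : ℝ} (hμ : μ ≠ 0) {x : V → ℝ} (hx : x ≠ 0)
    (hxμ : weightedLap w *ᵥ x = μ • x) :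
    c * Fintype.card V ≤ μ := by
  have hsum : ∑ i, x i = 0 := by
    have := sum_weightedLap_mulVec hw x
    simp only [hxμ, Pi.smul_apply, smul_eq_mul, ← mul_sum] at this
    exact (mul_eq_zero.1 this).resolve_left hμ
  have hpos : 0 < x ⬝ᵥ x := by
    simpa using dotProduct_self_star_pos_iff.2 hx
  have hcompare : c * ∑ i, ∑ j, (x i - x j) ^ 2 ≤ ∑ i, ∑ j, w i j * (x i - x j) ^ 2 := by
    rw [mul_sum]
    refine sum_le_sum fun i _ => ?_
    rw [mul_sum]
    refine sum_le_sum fun j _ => ?_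
    rcases eq_or_ne i j with rfl | hij
    · simp
    · exact mul_le_mul_of_nonneg_right (hc i j hij) (sq_nonneg _)
  rw [sum_sum_sub_sq, hsum, ← two_mul_dotProduct_weightedLap_mulVec hw, hxμ,
    dotProduct_smul, smul_eq_mul] at hcompare
  nlinarith

end Matrix

theorem distLap_eq_weightedLap {V : Type*} [Fintype V] [DecidableEq V] (G : SimpleGraph V) :
    distLap G = weightedLap (fun u v => (G.dist u v : ℝ)) :=
  rfl

theorem stmt15_general {V : Type*} [Fintype V] [DecidableEq V] (G : SimpleGraph V)
    (hG : G.Connected) :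
    ∀ μ : ℝ, (distLap G).charpoly.IsRoot μ → μ ≠ 0 → (Fintype.card V : ℝ) ≤ μ := by
  intro μ hroot hμ
  rw [distLap_eq_weightedLap] at hroot
  obtain ⟨x, hx, hxμ⟩ := exists_mulVec_eq_smul_of_isRoot_charpoly hroot
  have hdist : ∀ i j, i ≠ j → (1 : ℝ) ≤ G.dist i j := fun i j hij =>
    mod_cast hG.pos_dist_of_ne hij
  simpa using card_mul_le_of_weightedLap_mulVec_eq_smul (fun i j => by rw [G.dist_comm])
    hdist hμ hx hxμ

/-- For a connected graph `G` on `n ≥ 2` vertices, every nonzero distance Laplacian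
eigenvalue is at least `n`; in particular `∂^L_{n-1}(G) ≥ n`. -/
theorem stmt15 {V : Type*} [Fintype V] [DecidableEq V] (G : SimpleGraph V)
    (hG : G.Connected) (hn : 2 ≤ Fintype.card V) :
    ∀ μ : ℝ, (distLap G).charpoly.IsRoot μ → μ ≠ 0 → (Fintype.card V : ℝ) ≤ μ :=
  stmt15_general G hG
end

section
/- Let n be a power of 2 and Q_n the generalized quaternion group of order 4n. The largest distance Laplacian eigenvalue of the power graph P(Q_n) satisfies 8n - 2 ≤ ∂_1^L(P(Q_n)) < 8n - 1. -/
open Polynomial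

/-- The power graph of a group: distinct `x, y` are adjacent iff one is a power of the
other. -/
def powerGraph (M : Type*) [Monoid M] : SimpleGraph M :=
  SimpleGraph.fromRel (fun x y => ∃ k : ℕ, y = x ^ k)

namespace Stmt18Aux

open QuaternionGroup SimpleGraph

theorem isRoot_charpoly_iff {m : Type*} [Fintype m] [DecidableEq m] (M : Matrix m m ℝ) (x : ℝ) :
    M.charpoly.IsRoot x ↔ ∃ v, v ≠ 0 ∧ M.mulVec v = x • v := by
  have h1 : M.charpoly.eval x = (Matrix.diagonal (fun _ => x) - M).det := by
    rw [Matrix.charpoly, ← Polynomial.coe_evalRingHom, RingHom.map_det]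
    congr 1
    ext i j
    by_cases h : i = j <;>
      simp [h, Matrix.charmatrix_apply_eq, Matrix.charmatrix_apply_ne, Matrix.diagonal_apply]
  have h2 : ∀ v : m → ℝ, (Matrix.diagonal (fun _ => x) - M).mulVec v = x • v - M.mulVec v := by
    intro v
    rw [Matrix.sub_mulVec]
    congr 1
    ext i
    simp [Matrix.mulVec_diagonal]
  rw [Polynomial.IsRoot, h1, ← Matrix.exists_mulVec_eq_zero_iff]
  constructor
  · rintro ⟨v, hv, h⟩
    exact ⟨v, hv, by rw [h2] at h; linear_combination (norm := module) -h⟩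
  · rintro ⟨v, hv, h⟩
    exact ⟨v, hv, by rw [h2, h, sub_self]⟩

variable {n : ℕ}

theorem pg_adj_iff {M : Type*} [Monoid M] {x y : M} :
    (powerGraph M).Adj x y ↔ x ≠ y ∧ ((∃ k : ℕ, y = x ^ k) ∨ ∃ k : ℕ, x = y ^ k) := by
  simp [powerGraph, SimpleGraph.fromRel_adj]

theorem adj_one {w : QuaternionGroup n} (h : w ≠ 1) :
    (powerGraph (QuaternionGroup n)).Adj 1 w := by
  rw [pg_adj_iff]
  exact ⟨fun hh => h hh.symm, Or.inr ⟨0, (pow_zero w).symm⟩⟩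

theorem a_pow' (i : ZMod (2 * n)) (k : ℕ) :
    (a i : QuaternionGroup n) ^ k = a ((k : ZMod (2 * n)) * i) := by
  induction k with
  | zero => simp
  | succ k ih => rw [pow_succ, ih, a_mul_a]; congr 1; push_cast; ring

theorem n_add_n : (n : ZMod (2 * n)) + n = 0 := by
  have : ((2 * n : ℕ) : ZMod (2 * n)) = 0 := ZMod.natCast_self _
  push_cast at this
  linear_combination this

theorem xa_pow_mem (i : ZMod (2 * n)) (k : ℕ) :
    (xa i : QuaternionGroup n) ^ k = a 0 ∨ (xa i : QuaternionGroup n) ^ k = a n ∨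
    (xa i : QuaternionGroup n) ^ k = xa i ∨
    (xa i : QuaternionGroup n) ^ k = xa (i + (n : ZMod (2 * n))) := by
  induction k with
  | zero => left; simp
  | succ k ih =>
    rcases ih with h | h | h | h <;> rw [pow_succ, h]
    · right; right; left; rw [a_mul_xa, sub_zero]
    · right; right; right; rw [a_mul_xa]
      congr 1
      linear_combination -n_add_n (n := n)
    · right; left; rw [xa_mul_xa]; congr 1; ring
    · left; rw [xa_mul_xa]; congr 1; ring

theorem exists_mul_eq_n [NeZero n] (hn : ∃ k : ℕ, n = 2 ^ k)
    (i : ZMod (2 * n)) (hi : i ≠ 0) :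
    ∃ c : ℕ, (c : ZMod (2 * n)) * i = (n : ZMod (2 * n)) := by
  obtain ⟨k, hk⟩ := hn
  have hm : 0 < 2 * n := by have := NeZero.pos n; omega
  haveI : NeZero (2 * n) := ⟨by omega⟩
  set iv := i.val with hivdef
  have hivlt : iv < 2 * n := ZMod.val_lt i
  have hiv0 : 0 < iv := by
    rcases Nat.eq_zero_or_pos iv with h | h
    · exact absurd ((ZMod.val_eq_zero i).mp h) hi
    · exact h
  set g := Nat.gcd iv (2 * n) with hgdef
  have hgdvd : g ∣ 2 * n := Nat.gcd_dvd_right _ _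
  have hgle : g ≤ iv := Nat.le_of_dvd hiv0 (Nat.gcd_dvd_left _ _)
  have h2n : 2 * n = 2 ^ (k + 1) := by rw [hk]; ring
  have hgn : g ∣ n := by
    rw [h2n] at hgdvd
    obtain ⟨s, hs, hgs⟩ := (Nat.dvd_prime_pow Nat.prime_two).mp hgdvd
    have hsk : s ≤ k := by
      by_contra hcon
      have : s = k + 1 := by omega
      subst this
      omega
    rw [hk, hgs]
    exact pow_dvd_pow 2 hsk
  obtain ⟨d, hd⟩ := hgn
  have hbez : (g : ℤ) = iv * Nat.gcdA iv (2 * n) + (2 * n) * Nat.gcdB iv (2 * n) :=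
    Nat.gcd_eq_gcd_ab iv (2 * n)
  set A := Nat.gcdA iv (2 * n)
  set B := Nat.gcdB iv (2 * n)
  set w : ZMod (2 * n) := ((A * d : ℤ) : ZMod (2 * n)) with hw
  refine ⟨w.val, ?_⟩
  have hwv : ((w.val : ℕ) : ZMod (2 * n)) = w := ZMod.natCast_rightInverse w
  rw [hwv]
  have hicast : ((iv : ℕ) : ZMod (2 * n)) = i := ZMod.natCast_rightInverse i
  rw [← hicast, hw]
  have key : ((A * d * iv : ℤ) : ZMod (2 * n)) = ((n : ℤ) : ZMod (2 * n)) := by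
    rw [ZMod.intCast_eq_intCast_iff]
    have : ((2 * n : ℕ) : ℤ) ∣ (n : ℤ) - A * d * iv := by
      refine ⟨B * d, ?_⟩
      have hnd : (n : ℤ) = g * d := by exact_mod_cast congrArg Nat.cast hd
      rw [hnd, hbez]
      push_cast
      ring
    exact (Int.modEq_iff_dvd.mpr this).symm.symm
  push_cast at key ⊢
  linear_combination key

theorem nz_n [NeZero n] : (n : ZMod (2 * n)) ≠ 0 := by
  intro h
  have h1 : ((n : ZMod (2 * n))).val = n := ZMod.val_natCast_of_lt (by have := NeZero.pos n; omega)
  rw [h] at h1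
  simp at h1
  exact (NeZero.ne n) h1.symm

theorem adj_z [NeZero n] (hn : ∃ k : ℕ, n = 2 ^ k) {w : QuaternionGroup n}
    (h : w ≠ a n) : (powerGraph (QuaternionGroup n)).Adj (a n) w := by
  rw [pg_adj_iff]
  refine ⟨fun hh => h hh.symm, ?_⟩
  cases w with
  | a i =>
    by_cases hi : i = 0
    · subst hi
      refine Or.inl ⟨2, ?_⟩
      rw [a_pow']
      congr 1
      push_cast
      linear_combination -n_add_n (n := n)
    · obtain ⟨c, hc⟩ := exists_mul_eq_n hn i hi
      refine Or.inr ⟨c, ?_⟩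
      rw [a_pow', hc]
  | xa j => exact Or.inr ⟨2, (xa_sq j).symm⟩

theorem adj_a_xa_iff [NeZero n] (i j : ZMod (2 * n)) :
    (powerGraph (QuaternionGroup n)).Adj (a i) (xa j) ↔
      (i = 0 ∨ i = (n : ZMod (2 * n))) := by
  rw [pg_adj_iff]
  constructor
  · rintro ⟨hne, ⟨k, hk⟩ | ⟨k, hk⟩⟩
    · rw [a_pow'] at hk; exact absurd hk (by simp)
    · rcases xa_pow_mem j k with h | h | h | h <;> rw [h] at hk
      · left; exact (a.injEq _ _ ▸ hk : i = 0)
      · right; exact (a.injEq _ _ ▸ hk : i = (n : ZMod (2 * n)))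
      · exact absurd hk (by simp)
      · exact absurd hk (by simp)
  · rintro (rfl | rfl)
    · exact ⟨by simp [-a_zero], Or.inr ⟨0, by simp⟩⟩
    · exact ⟨by simp, Or.inr ⟨2, (xa_sq j).symm⟩⟩

theorem adj_xa_xa_iff [NeZero n] (i j : ZMod (2 * n)) :
    (powerGraph (QuaternionGroup n)).Adj (xa i) (xa j) ↔ j = i + (n : ZMod (2 * n)) := by
  rw [pg_adj_iff]
  constructor
  · rintro ⟨hne, ⟨k, hk⟩ | ⟨k, hk⟩⟩
    · rcases xa_pow_mem i k with h | h | h | h <;> rw [h] at hk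
      · exact absurd hk (by simp [-a_zero])
      · exact absurd hk (by simp)
      · exact absurd hk.symm (by simpa using hne)
      · exact (xa.injEq _ _ ▸ hk : j = i + _)
    · rcases xa_pow_mem j k with h | h | h | h <;> rw [h] at hk
      · exact absurd hk (by simp [-a_zero])
      · exact absurd hk (by simp)
      · exact absurd hk (by simpa using hne)
      · have : i = j + (n : ZMod (2 * n)) := (xa.injEq _ _ ▸ hk)
        linear_combination -this - n_add_n (n := n)
  · rintro rfl
    constructor
    · simp only [ne_eq, xa.injEq]
      intro hcon
      exact nz_n (n := n) (by linear_combination -hcon)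
    · refine Or.inl ⟨3, ?_⟩
      have : (xa i : QuaternionGroup n) ^ 3 = (xa i) ^ 2 * xa i := pow_succ _ 2
      rw [this, xa_sq, a_mul_xa]
      congr 1
      linear_combination n_add_n (n := n)

open scoped Classical in
noncomputable def Aind (u w : QuaternionGroup n) : ℝ :=
  if (powerGraph (QuaternionGroup n)).Adj u w then 1 else 0

theorem Aind_nonneg (u w : QuaternionGroup n) : 0 ≤ Aind u w := by
  unfold Aind; split <;> norm_num

theorem Aind_symm (u w : QuaternionGroup n) : Aind u w = Aind w u := by
  unfold Aind
  by_cases h : (powerGraph (QuaternionGroup n)).Adj u w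
  · rw [if_pos h, if_pos h.symm]
  · rw [if_neg h, if_neg (fun hh => h hh.symm)]

theorem Aind_one {w : QuaternionGroup n} (h : w ≠ 1) : Aind 1 w = 1 := by
  unfold Aind
  rw [if_pos (adj_one h)]

theorem Aind_z [NeZero n] (hn : ∃ k : ℕ, n = 2 ^ k) {w : QuaternionGroup n} (h : w ≠ a n) :
    Aind (a (n : ZMod (2 * n))) w = 1 := by
  unfold Aind
  rw [if_pos (adj_z hn h)]

theorem dist_formula [NeZero n] (u w : QuaternionGroup n) :
    ((powerGraph (QuaternionGroup n)).dist u w : ℝ) =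
      2 - 2 * (if u = w then 1 else 0) - Aind u w := by
  unfold Aind
  by_cases h1 : u = w
  · subst h1
    simp [SimpleGraph.dist_self]
  · by_cases h2 : (powerGraph (QuaternionGroup n)).Adj u w
    · rw [SimpleGraph.dist_eq_one_iff_adj.mpr h2]
      simp [h1, h2]
      norm_num
    · have hu : u ≠ 1 := by rintro rfl; exact h2 (adj_one (Ne.symm h1))
      have hw : w ≠ 1 := by rintro rfl; exact h2 (adj_one hu).symm
      have p : (powerGraph (QuaternionGroup n)).Walk u w :=
        Walk.cons (adj_one hu).symm (Walk.cons (adj_one hw) Walk.nil)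
      have hle : (powerGraph (QuaternionGroup n)).dist u w ≤ 2 := by
        have := SimpleGraph.dist_le (Walk.cons (adj_one hu).symm (Walk.cons (adj_one hw) Walk.nil))
        simpa using this
      have hne0 : (powerGraph (QuaternionGroup n)).dist u w ≠ 0 := by
        intro h0
        rcases SimpleGraph.dist_eq_zero_iff_eq_or_not_reachable.mp h0 with h | h
        · exact h1 h
        · exact h ⟨p⟩
      have hne1 : (powerGraph (QuaternionGroup n)).dist u w ≠ 1 := by
        intro h0
        exact h2 (SimpleGraph.dist_eq_one_iff_adj.mp h0)
      have : (powerGraph (QuaternionGroup n)).dist u w = 2 := by omega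
      simp [this, h1, h2]

def sumEquiv : ZMod (2 * n) ⊕ ZMod (2 * n) ≃ QuaternionGroup n where
  toFun x := match x with | .inl j => a j | .inr j => xa j
  invFun i := match i with | a j => .inl j | xa j => .inr j
  left_inv := by rintro (x | x) <;> rfl
  right_inv := by rintro (x | x) <;> rfl

theorem sum_decomp [NeZero n] (f : QuaternionGroup n → ℝ) :
    ∑ u, f u = (∑ i, f (a i)) + ∑ i, f (xa i) := by
  rw [← Equiv.sum_comp (sumEquiv (n := n)) f, Fintype.sum_sum_type]
  rfl

theorem sum_ind [NeZero n] (f : QuaternionGroup n → ℝ) (c : QuaternionGroup n) :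
    ∑ w, f w * (if w = c then (1:ℝ) else 0) = f c := by
  simp [mul_ite]

theorem card_real [NeZero n] : ∑ _w : QuaternionGroup n, (1:ℝ) = 4 * n := by
  rw [Finset.sum_const, Finset.card_univ, QuaternionGroup.card]
  simp

theorem mulVec_distLap [NeZero n] (v : QuaternionGroup n → ℝ) (u : QuaternionGroup n) :
    (distLap (powerGraph (QuaternionGroup n))).mulVec v u =
      (∑ w, ((powerGraph (QuaternionGroup n)).dist u w : ℝ)) * v u -
        ∑ w, ((powerGraph (QuaternionGroup n)).dist u w : ℝ) * v w := by
  simp only [distLap, Matrix.mulVec, dotProduct, Matrix.sub_apply,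
    Matrix.diagonal_apply, Matrix.of_apply, sub_mul, Finset.sum_sub_distrib, ite_mul, zero_mul]
  congr 1
  rw [Finset.sum_ite_eq]
  simp

theorem deg_xa [NeZero n] (i : ZMod (2 * n)) : ∑ w, Aind (xa i) w = 3 := by
  rw [sum_decomp]
  have h1 : ∀ j : ZMod (2 * n), Aind (xa i) (a j) =
      (if j = 0 then (1:ℝ) else 0) + (if j = (n : ZMod (2 * n)) then 1 else 0) := by
    intro j
    rw [Aind_symm]
    unfold Aind
    by_cases h0 : j = 0
    · subst h0
      rw [if_pos ((adj_a_xa_iff 0 i).mpr (Or.inl rfl)), if_pos rfl,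
        if_neg (fun hh => nz_n (n := n) hh.symm)]
      norm_num
    · by_cases hn' : j = (n : ZMod (2 * n))
      · subst hn'
        rw [if_pos ((adj_a_xa_iff _ i).mpr (Or.inr rfl)), if_neg h0, if_pos rfl]
        norm_num
      · rw [if_neg, if_neg h0, if_neg hn']
        · norm_num
        · intro hadj
          rcases (adj_a_xa_iff j i).mp hadj with h | h
          · exact h0 h
          · exact hn' h
  have h2 : ∀ j : ZMod (2 * n), Aind (xa i) (xa j) =
      (if j = i + (n : ZMod (2 * n)) then (1:ℝ) else 0) := by
    intro j
    unfold Aind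
    by_cases h : j = i + (n : ZMod (2 * n))
    · rw [if_pos ((adj_xa_xa_iff i j).mpr h), if_pos h]
    · rw [if_neg (fun hh => h ((adj_xa_xa_iff i j).mp hh)), if_neg h]
  rw [Finset.sum_congr rfl fun j _ => h1 j, Finset.sum_congr rfl fun j _ => h2 j,
    Finset.sum_add_distrib]
  simp [Finset.sum_ite_eq']
  norm_num

theorem sum_dist_xa [NeZero n] (i : ZMod (2 * n)) :
    ∑ w, ((powerGraph (QuaternionGroup n)).dist (xa i) w : ℝ) = 8 * n - 5 := by
  rw [Finset.sum_congr rfl fun w _ => dist_formula (xa i) w,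
    Finset.sum_sub_distrib, Finset.sum_sub_distrib, deg_xa, ← Finset.mul_sum]
  have h1 : ∑ w : QuaternionGroup n, (if xa i = w then (1:ℝ) else 0) = 1 := by
    simp [Finset.sum_ite_eq]
  have h2 : ∑ _w : QuaternionGroup n, (2:ℝ) = 8 * n := by
    rw [Finset.sum_const, Finset.card_univ, QuaternionGroup.card, nsmul_eq_mul]
    push_cast; ring
  rw [h1, h2]; ring

theorem zm_ne [NeZero n] {x y : ℕ} (hx : x < 2 * n) (hy : y < 2 * n) (hxy : x ≠ y) :
    (x : ZMod (2 * n)) ≠ (y : ZMod (2 * n)) := by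
  intro h
  have := congrArg ZMod.val h
  rw [ZMod.val_natCast_of_lt hx, ZMod.val_natCast_of_lt hy] at this
  exact hxy this

theorem zm_facts [NeZero n] (hn2 : 2 ≤ n) :
    ((0 : ZMod (2 * n)) ≠ (n : ZMod (2 * n))) ∧ ((0 : ZMod (2 * n)) ≠ 1) ∧
      ((0 : ZMod (2 * n)) ≠ (n : ZMod (2 * n)) + 1) ∧ ((n : ZMod (2 * n)) ≠ 1) ∧
      ((n : ZMod (2 * n)) ≠ (n : ZMod (2 * n)) + 1) ∧
      ((1 : ZMod (2 * n)) ≠ (n : ZMod (2 * n)) + 1) := by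
  have e0 : (0 : ZMod (2 * n)) = ((0 : ℕ) : ZMod (2 * n)) := by norm_num
  have e1 : (1 : ZMod (2 * n)) = ((1 : ℕ) : ZMod (2 * n)) := by norm_num
  have en1 : (n : ZMod (2 * n)) + 1 = (((n + 1 : ℕ)) : ZMod (2 * n)) := by push_cast; ring
  refine ⟨?_, ?_, ?_, ?_, ?_, ?_⟩
  · rw [e0]; exact zm_ne (by omega) (by omega) (by omega)
  · rw [e0, e1]; exact zm_ne (by omega) (by omega) (by omega)
  · rw [e0, en1]; exact zm_ne (by omega) (by omega) (by omega)
  · rw [e1]; exact zm_ne (by omega) (by omega) (by omega)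
  · rw [en1]; exact zm_ne (by omega) (by omega) (by omega)
  · rw [en1, e1]; exact zm_ne (by omega) (by omega) (by omega)

noncomputable def v0 [NeZero n] : QuaternionGroup n → ℝ := fun w =>
  (if w = xa 0 then 1 else 0) + (if w = xa (n : ZMod (2 * n)) then 1 else 0)
    - (if w = xa 1 then 1 else 0) - (if w = xa ((n : ZMod (2 * n)) + 1) then 1 else 0)

theorem v0_a [NeZero n] (i : ZMod (2 * n)) : v0 (a i : QuaternionGroup n) = 0 := by
  simp [v0]

theorem v0_xa [NeZero n] (j : ZMod (2 * n)) :
    v0 (xa j : QuaternionGroup n) =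
      (if j = 0 then (1:ℝ) else 0) + (if j = (n : ZMod (2 * n)) then 1 else 0)
        - (if j = 1 then 1 else 0) - (if j = (n : ZMod (2 * n)) + 1 then 1 else 0) := by
  simp [v0, xa.injEq]

theorem v0_ne_zero [NeZero n] (hn2 : 2 ≤ n) : (v0 : QuaternionGroup n → ℝ) ≠ 0 := by
  obtain ⟨d1, d2, d3, _, _, _⟩ := zm_facts (n := n) hn2
  intro h
  have := congrFun h (xa 0)
  rw [v0_xa] at this
  rw [if_pos rfl, if_neg d1, if_neg d2, if_neg d3] at this
  norm_num at this

theorem sum_v0 [NeZero n] : ∑ w, (v0 : QuaternionGroup n → ℝ) w = 0 := by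
  unfold v0
  rw [Finset.sum_sub_distrib, Finset.sum_sub_distrib, Finset.sum_add_distrib]
  simp [Finset.sum_ite_eq']

theorem sum_Aind_v0 [NeZero n] (u : QuaternionGroup n) :
    ∑ w, Aind u w * v0 w =
      Aind u (xa 0) + Aind u (xa (n : ZMod (2 * n))) - Aind u (xa 1)
        - Aind u (xa ((n : ZMod (2 * n)) + 1)) := by
  unfold v0
  have : ∀ w, Aind u w * ((if w = xa 0 then (1:ℝ) else 0) +
      (if w = xa (n : ZMod (2 * n)) then 1 else 0) - (if w = xa 1 then 1 else 0) -
      (if w = xa ((n : ZMod (2 * n)) + 1) then 1 else 0)) =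
      Aind u w * (if w = xa 0 then (1:ℝ) else 0) +
      Aind u w * (if w = xa (n : ZMod (2 * n)) then 1 else 0) -
      Aind u w * (if w = xa 1 then 1 else 0) -
      Aind u w * (if w = xa ((n : ZMod (2 * n)) + 1) then 1 else 0) := fun w => by ring
  rw [Finset.sum_congr rfl fun w _ => this w, Finset.sum_sub_distrib, Finset.sum_sub_distrib,
    Finset.sum_add_distrib, sum_ind, sum_ind, sum_ind, sum_ind]

theorem eigen_main [NeZero n] (hn2 : 2 ≤ n) :
    (distLap (powerGraph (QuaternionGroup n))).mulVec v0 = (8 * (n:ℝ) - 2) • v0 := by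
  funext u
  rw [mulVec_distLap, Pi.smul_apply, smul_eq_mul]
  have hsub : ∑ w, ((powerGraph (QuaternionGroup n)).dist u w : ℝ) * v0 w
      = -2 * v0 u - ∑ w, Aind u w * v0 w := by
    have h1 : ∀ w, ((powerGraph (QuaternionGroup n)).dist u w : ℝ) * v0 w
        = 2 * v0 w - 2 * ((if u = w then (1:ℝ) else 0) * v0 w) - Aind u w * v0 w := by
      intro w; rw [dist_formula]; ring
    rw [Finset.sum_congr rfl fun w _ => h1 w, Finset.sum_sub_distrib, Finset.sum_sub_distrib,
      ← Finset.mul_sum, ← Finset.mul_sum, sum_v0]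
    have h2 : ∑ w, (if u = w then (1:ℝ) else 0) * v0 w = v0 u := by
      simp [ite_mul, Finset.sum_ite_eq]
    rw [h2]; ring
  rw [hsub, sum_Aind_v0]
  cases u with
  | a i =>
    have hAa : ∀ j : ZMod (2 * n), Aind (a i : QuaternionGroup n) (xa j) =
        (if i = 0 ∨ i = (n : ZMod (2 * n)) then (1:ℝ) else 0) := by
      intro j
      unfold Aind
      by_cases h : i = 0 ∨ i = (n : ZMod (2 * n))
      · rw [if_pos ((adj_a_xa_iff i j).mpr h), if_pos h]
      · rw [if_neg (fun hh => h ((adj_a_xa_iff i j).mp hh)), if_neg h]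
    rw [hAa, hAa, hAa, hAa, v0_a]
    ring
  | xa i =>
    obtain ⟨d1, d2, d3, d4, d5, d6⟩ := zm_facts (n := n) hn2
    have hAx : ∀ j : ZMod (2 * n), Aind (xa i : QuaternionGroup n) (xa j) =
        (if j = i + (n : ZMod (2 * n)) then (1:ℝ) else 0) := by
      intro j
      unfold Aind
      by_cases h : j = i + (n : ZMod (2 * n))
      · rw [if_pos ((adj_xa_xa_iff i j).mpr h), if_pos h]
      · rw [if_neg (fun hh => h ((adj_xa_xa_iff i j).mp hh)), if_neg h]
    rw [sum_dist_xa, hAx, hAx, hAx, hAx, v0_xa]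
    have e1 : ((0 : ZMod (2 * n)) = i + (n : ZMod (2 * n))) ↔ (i = (n : ZMod (2 * n))) := by
      constructor <;> intro h <;> linear_combination -h - n_add_n (n := n)
    have e2 : ((n : ZMod (2 * n)) = i + (n : ZMod (2 * n))) ↔ (i = 0) := by
      constructor <;> intro h
      · linear_combination -h
      · linear_combination -h
    have e3 : ((1 : ZMod (2 * n)) = i + (n : ZMod (2 * n))) ↔ (i = (n : ZMod (2 * n)) + 1) := by
      constructor <;> intro h <;> linear_combination -h - n_add_n (n := n)
    have e4 : ((n : ZMod (2 * n)) + 1 = i + (n : ZMod (2 * n))) ↔ (i = 1) := by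
      constructor <;> intro h
      · linear_combination -h
      · linear_combination -h
    simp only [e1, e2, e3, e4]
    ring

theorem upper_bound [NeZero n] (hn2 : 2 ≤ n) (hn : ∃ k : ℕ, n = 2 ^ k) (x : ℝ)
    (v : QuaternionGroup n → ℝ) (hv : v ≠ 0)
    (heig : (distLap (powerGraph (QuaternionGroup n))).mulVec v = x • v) :
    x ≤ 8 * (n:ℝ) - 2 := by
  classical
  set m := ∑ u : QuaternionGroup n, (v u)^2 with hm
  set S := ∑ u : QuaternionGroup n, v u with hS
  set aa := v 1 with haa
  set bb := v (a (n : ZMod (2*n))) with hbb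
  set QA := ∑ u : QuaternionGroup n, ∑ w : QuaternionGroup n,
    Aind u w * ((v u)^2 - v u * v w) with hQA
  set T1 := ∑ w : QuaternionGroup n, (v w - aa)^2 with hT1
  set T2 := ∑ w : QuaternionGroup n, (v w - bb)^2 with hT2
  have h1an : (1 : QuaternionGroup n) ≠ a (n : ZMod (2*n)) := by
    rw [one_def]
    simp only [ne_eq, a.injEq]
    exact (zm_facts hn2).1
  have hcard : ∑ _w : QuaternionGroup n, (1:ℝ) = 4 * n := card_real
  have hF1 : ∀ u, Aind u 1 * (v u - aa) ^ 2 = (v u - aa) ^ 2 := by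
    intro u
    by_cases h : u = 1
    · subst h; rw [← haa, sub_self]; ring
    · rw [Aind_symm, Aind_one h, one_mul]
  have hF2 : ∀ u, Aind u (a (n : ZMod (2*n))) * (v u - bb) ^ 2 = (v u - bb) ^ 2 := by
    intro u
    by_cases h : u = a (n : ZMod (2*n))
    · subst h; rw [← hbb, sub_self]; ring
    · rw [Aind_symm, Aind_z hn h, one_mul]
  have hconst : ∀ c : ℝ, ∑ _w : QuaternionGroup n, c = 4 * n * c := by
    intro c
    rw [Finset.sum_const, Finset.card_univ, QuaternionGroup.card, nsmul_eq_mul]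
    push_cast; ring
  have hscale : ∀ (c : ℝ) (f : QuaternionGroup n → ℝ), ∑ w, c * f w = c * ∑ w, f w :=
    fun c f => (Finset.mul_sum _ _ _).symm
  -- Step A : x * m = 8n m - 2 S² - QA
  have keyA : x * m = 8 * n * m - 2 * S^2 - QA := by
    have hpt : ∀ u, v u * ((distLap (powerGraph (QuaternionGroup n))).mulVec v u)
        = 8 * n * (v u)^2 - 2 * (v u) * S
          - ∑ w, Aind u w * ((v u)^2 - v u * v w) := by
      intro u
      rw [mulVec_distLap]
      have step1 : v u * ((∑ w, ((powerGraph (QuaternionGroup n)).dist u w : ℝ)) * v u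
          - ∑ w, ((powerGraph (QuaternionGroup n)).dist u w : ℝ) * v w)
          = ∑ w, ((powerGraph (QuaternionGroup n)).dist u w : ℝ) * ((v u)^2 - v u * v w) := by
        rw [mul_sub, Finset.sum_mul, Finset.mul_sum, Finset.mul_sum, ← Finset.sum_sub_distrib]
        exact Finset.sum_congr rfl fun w _ => by ring
      rw [step1]
      have step2 : ∀ w, ((powerGraph (QuaternionGroup n)).dist u w : ℝ) * ((v u)^2 - v u * v w)
          = (2*(v u)^2 - 2*(v u)*(v w)) - Aind u w * ((v u)^2 - v u * v w) := by
        intro w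
        rw [dist_formula]
        by_cases h : u = w
        · subst h; rw [if_pos rfl]; ring
        · rw [if_neg h]; ring
      rw [Finset.sum_congr rfl fun w _ => step2 w, Finset.sum_sub_distrib]
      congr 1
      rw [Finset.sum_sub_distrib, hconst (2*(v u)^2), hscale (2*(v u)) v, hS]
      ring
    have hxm : x * m = ∑ u, v u * ((distLap (powerGraph (QuaternionGroup n))).mulVec v u) := by
      rw [hm, Finset.mul_sum]
      refine Finset.sum_congr rfl fun u _ => ?_
      rw [congrFun heig u, Pi.smul_apply, smul_eq_mul]
      ring
    rw [hxm, Finset.sum_congr rfl fun u _ => hpt u, Finset.sum_sub_distrib,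
      Finset.sum_sub_distrib, ← hQA]
    have e1 : ∑ u : QuaternionGroup n, 8 * n * (v u)^2 = 8 * n * m := by
      rw [hm, Finset.mul_sum]
    have e2 : ∑ u : QuaternionGroup n, 2 * (v u) * S = 2 * S^2 := by
      rw [← Finset.sum_mul, ← Finset.mul_sum, ← hS]
      ring
    rw [e1, e2]
  -- rows
  have rowP_nonneg : ∀ u w, (0:ℝ) ≤ Aind u w * (v u - v w)^2 := fun u w =>
    mul_nonneg (Aind_nonneg u w) (sq_nonneg _)
  have hrow1 : ∑ w, Aind 1 w * (v 1 - v w)^2 = T1 := by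
    rw [hT1]
    refine Finset.sum_congr rfl fun w _ => ?_
    have : (v 1 - v w)^2 = (v w - aa)^2 := by rw [← haa]; ring
    rw [this, Aind_symm, hF1 w]
  have hrow2 : ∑ w, Aind (a (n : ZMod (2*n))) w * (v (a (n : ZMod (2*n))) - v w)^2 = T2 := by
    rw [hT2]
    refine Finset.sum_congr rfl fun w _ => ?_
    have : (v (a (n : ZMod (2*n))) - v w)^2 = (v w - bb)^2 := by rw [← hbb]; ring
    rw [this, Aind_symm, hF2 w]
  have hpairle : ∀ u : QuaternionGroup n,
      (v u - aa)^2 + (v u - bb)^2 ≤ ∑ w, Aind u w * (v u - v w)^2 := by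
    intro u
    have heq : (v u - aa)^2 + (v u - bb)^2
        = ∑ w ∈ ({1, a (n : ZMod (2*n))} : Finset (QuaternionGroup n)),
            Aind u w * (v u - v w)^2 := by
      rw [Finset.sum_pair h1an, ← haa, ← hbb, hF1 u, hF2 u]
    rw [heq]
    exact Finset.sum_le_sum_of_subset_of_nonneg (Finset.subset_univ _)
      (fun w _ _ => rowP_nonneg u w)
  -- Step B : 2 QA = P
  set P := ∑ u : QuaternionGroup n, ∑ w : QuaternionGroup n, Aind u w * (v u - v w)^2 with hP
  have keyB : P = 2 * QA := by
    have hsplit : ∀ u w : QuaternionGroup n, Aind u w * (v u - v w)^2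
        = Aind u w * ((v u)^2 - v u * v w) + Aind u w * ((v w)^2 - v w * v u) := by
      intro u w; ring
    rw [hP, Finset.sum_congr rfl fun u _ => Finset.sum_congr rfl fun w _ => hsplit u w,
      Finset.sum_congr rfl fun u _ => Finset.sum_add_distrib, Finset.sum_add_distrib, ← hQA]
    have : ∑ u : QuaternionGroup n, ∑ w : QuaternionGroup n,
        Aind u w * ((v w)^2 - v w * v u) = QA := by
      rw [Finset.sum_comm, hQA]
      exact Finset.sum_congr rfl fun w _ => Finset.sum_congr rfl fun u _ => by
        rw [Aind_symm]
    rw [this]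
    ring
  -- Step C : P ≥ 2 T1 + 2 T2 - 2 (aa - bb)²
  have keyC : 2 * T1 + 2 * T2 - 2 * (aa - bb)^2 ≤ P := by
    set s : Finset (QuaternionGroup n) := {1, a (n : ZMod (2*n))} with hs
    have hsdP : ∑ u ∈ Finset.univ \ s, (∑ w, Aind u w * (v u - v w)^2)
        + ∑ u ∈ s, (∑ w, Aind u w * (v u - v w)^2) = P := by
      rw [hP]
      exact Finset.sum_sdiff (Finset.subset_univ s)
    have hsP : ∑ u ∈ s, (∑ w, Aind u w * (v u - v w)^2) = T1 + T2 := by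
      rw [hs, Finset.sum_pair h1an, hrow1, hrow2]
    have hsdlow : ∑ u ∈ Finset.univ \ s, ((v u - aa)^2 + (v u - bb)^2)
        ≤ ∑ u ∈ Finset.univ \ s, (∑ w, Aind u w * (v u - v w)^2) :=
      Finset.sum_le_sum fun u _ => hpairle u
    have hsdval : ∑ u ∈ Finset.univ \ s, ((v u - aa)^2 + (v u - bb)^2)
        = T1 + T2 - (aa - bb)^2 - (bb - aa)^2 := by
      have htot : ∑ u ∈ Finset.univ \ s, ((v u - aa)^2 + (v u - bb)^2)
          + ∑ u ∈ s, ((v u - aa)^2 + (v u - bb)^2)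
          = ∑ u : QuaternionGroup n, ((v u - aa)^2 + (v u - bb)^2) :=
        Finset.sum_sdiff (Finset.subset_univ s)
      have huniv : ∑ u : QuaternionGroup n, ((v u - aa)^2 + (v u - bb)^2) = T1 + T2 := by
        rw [Finset.sum_add_distrib, ← hT1, ← hT2]
      have hss : ∑ u ∈ s, ((v u - aa)^2 + (v u - bb)^2)
          = (aa - bb)^2 + (bb - aa)^2 := by
        rw [hs, Finset.sum_pair h1an, ← haa, ← hbb]
        ring
      linarith [htot, huniv, hss]
    linarith [hsdP, hsP, hsdlow, hsdval, sq_nonneg (aa - bb), sq_nonneg (bb - aa)]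
  -- Step D : T1, T2 values
  have hT1v : T1 = m - 2*aa*S + 4*n*aa^2 := by
    rw [hT1]
    have : ∀ w : QuaternionGroup n, (v w - aa)^2 = (v w)^2 - (2*aa) * v w + aa^2 * 1 := by
      intro w; ring
    rw [Finset.sum_congr rfl fun w _ => this w, Finset.sum_add_distrib, Finset.sum_sub_distrib,
      ← Finset.mul_sum, ← Finset.mul_sum, hcard, ← hm, ← hS]
    ring
  have hT2v : T2 = m - 2*bb*S + 4*n*bb^2 := by
    rw [hT2]
    have : ∀ w : QuaternionGroup n, (v w - bb)^2 = (v w)^2 - (2*bb) * v w + bb^2 * 1 := by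
      intro w; ring
    rw [Finset.sum_congr rfl fun w _ => this w, Finset.sum_add_distrib, Finset.sum_sub_distrib,
      ← Finset.mul_sum, ← Finset.mul_sum, hcard, ← hm, ← hS]
    ring
  -- conclude
  have h4n : (8:ℝ) ≤ 4*n := by
    have : (2:ℝ) ≤ n := by exact_mod_cast hn2
    linarith
  have hm0 : 0 < m := by
    obtain ⟨u, hu⟩ := Function.ne_iff.mp hv
    have h1 : (v u)^2 ≤ m := Finset.single_le_sum (fun i _ => sq_nonneg (v i)) (Finset.mem_univ u)
    have h2 : 0 < (v u)^2 :=
      lt_of_le_of_ne (sq_nonneg _) (Ne.symm (pow_ne_zero 2 hu))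
    linarith
  have hxm2 : x * m ≤ (8*n - 2) * m := by
    nlinarith [keyA, keyB, keyC, hT1v, hT2v, sq_nonneg (2*S - aa - bb), sq_nonneg (aa + bb),
      sq_nonneg (aa - bb), sq_nonneg aa, sq_nonneg bb, h4n,
      mul_le_mul_of_nonneg_right h4n (sq_nonneg aa),
      mul_le_mul_of_nonneg_right h4n (sq_nonneg bb)]
  exact le_of_mul_le_mul_right hxm2 hm0

end Stmt18Aux

/-- For `n` a power of `2` (`n ≥ 2`), the largest distance Laplacian eigenvalue of the
power graph of the generalized quaternion group `Q_n` of order `4n` satisfies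
`8n - 2 ≤ ∂₁^L(P(Q_n)) < 8n - 1`. -/
theorem stmt18 (n : ℕ) (hn2 : 2 ≤ n) (hn : ∃ k : ℕ, n = 2 ^ k) [NeZero n] :
    8 * (n : ℝ) - 2 ≤
        sSup {x : ℝ | (distLap (powerGraph (QuaternionGroup n))).charpoly.IsRoot x} ∧
      sSup {x : ℝ | (distLap (powerGraph (QuaternionGroup n))).charpoly.IsRoot x} <
        8 * (n : ℝ) - 1 := by
  have hmem : (8 * (n:ℝ) - 2) ∈
      {x : ℝ | (distLap (powerGraph (QuaternionGroup n))).charpoly.IsRoot x} := by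
    rw [Set.mem_setOf_eq, Stmt18Aux.isRoot_charpoly_iff]
    exact ⟨Stmt18Aux.v0, Stmt18Aux.v0_ne_zero hn2, Stmt18Aux.eigen_main hn2⟩
  have hub : ∀ y ∈ {x : ℝ | (distLap (powerGraph (QuaternionGroup n))).charpoly.IsRoot x},
      y ≤ 8 * (n:ℝ) - 2 := by
    intro y hy
    rw [Set.mem_setOf_eq, Stmt18Aux.isRoot_charpoly_iff] at hy
    obtain ⟨v, hv, hev⟩ := hy
    exact Stmt18Aux.upper_bound hn2 hn y v hv hev
  have hbdd : BddAbove {x : ℝ | (distLap (powerGraph (QuaternionGroup n))).charpoly.IsRoot x} :=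
    ⟨8 * (n:ℝ) - 2, hub⟩
  constructor
  · exact le_csSup hbdd hmem
  · have h := csSup_le ⟨_, hmem⟩ hub
    linarith
end
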